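/- arXiv:2205.09741 — 5 statements merged into one kernel-verified Lean document; each statement's English description precedes it below -/
import Mathlib

section
/- The abelian subalgebra 𝔡 ⊂ 𝔤₀ = 𝔰𝔩(V) consisting of the endomorphisms that are diagonal with respect to the basis e₁,…,e₈ is a Cartan subalgebra of the 133-dimensional Lie algebra 𝔤 = 𝔰𝔩(V) ⊕ Λ⁴V (i.e., 𝔡 is nilpotent and equal to its own normalizer in 𝔤). -/
/-!
Common setup: the ℤ/2-graded Lie algebra 𝔤 = 𝔰𝔩(V) ⊕ Λ⁴V for V = ℂ⁸,
following Antonyan.  Four-vectors are modeled as alternating 4-tensors in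
⊗⁴V, i.e. functions `(Fin 4 → Fin 8) → ℂ`, via the embedding
`v₁∧v₂∧v₃∧v₄ = Σ_σ sgn σ · v_{σ(1)}⊗v_{σ(2)}⊗v_{σ(3)}⊗v_{σ(4)}`.
(All indices are shifted from `1,…,8` to `0,…,7`.)
-/

noncomputable section

open scoped BigOperators

/-- `𝔤𝔩₈(ℂ)`, as 8×8 complex matrices. -/
abbrev gl8 : Type := Matrix (Fin 8) (Fin 8) ℂ

/-- Coordinates of an element of `⊗⁴ ℂ⁸`. -/
abbrev T4 : Type := (Fin 4 → Fin 8) → ℂ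

/-- The sign of a permutation, as a complex number. -/
def sgn {n : ℕ} (σ : Equiv.Perm (Fin n)) : ℂ := ((Equiv.Perm.sign σ : ℤ) : ℂ)

/-- A 4-tensor is alternating, i.e. lies in the image of `Λ⁴V ⊂ ⊗⁴V`. -/
def IsAlt (T : T4) : Prop :=
  ∀ (σ : Equiv.Perm (Fin 4)) (v : Fin 4 → Fin 8), T (v ∘ σ) = sgn σ * T v

/-- The determinant form `δ ∈ Λ⁸V*` with `δ(e₁,…,e₈) = 1`:
`delta8 f = δ_{f(1)…f(8)}`. -/
def delta8 (f : Fin 8 → Fin 8) : ℂ :=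
  Matrix.det (Matrix.of fun i j : Fin 8 => if f j = i then (1 : ℂ) else 0)

/-- The bracket on `𝔤₀ = 𝔰𝔩(V)`: the commutator of matrices. -/
def br00 (A B : gl8) : gl8 := A * B - B * A

/-- The bracket `[A,T]` of `A ∈ 𝔤₀` with `T ∈ 𝔤₁ = Λ⁴V`: the derivation
action `[A,T]^{ijkl} = A^i_s T^{sjkl} + A^j_s T^{iskl} + A^k_s T^{ijsl} + A^l_s T^{ijks}`. -/
def br01 (A : gl8) (T : T4) : T4 :=
  fun v => ∑ a : Fin 4, ∑ s : Fin 8, A (v a) s * T (Function.update v a s)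

/-- The bracket of two four-vectors,
`[T₁,T₂]^k_m = −(1/288) δ_{p₁q₁r₁s₁p₂q₂r₂m}(T₁^{p₁q₁r₁s₁}T₂^{p₂q₂r₂k} − T₂^{p₁q₁r₁s₁}T₁^{p₂q₂r₂k})`
(summation over the repeated indices `p₁,q₁,r₁,s₁,p₂,q₂,r₂`). -/
def br11 (T₁ T₂ : T4) : gl8 :=
  Matrix.of fun k m : Fin 8 =>
    -(1 / 288 : ℂ) * ∑ f : Fin 7 → Fin 8,
      delta8 (Fin.snoc f m) *
        (T₁ (fun a : Fin 4 => f (Fin.castAdd 3 a)) *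
            T₂ (Fin.snoc (fun b : Fin 3 => f (Fin.natAdd 4 b)) k) -
          T₂ (fun a : Fin 4 => f (Fin.castAdd 3 a)) *
            T₁ (Fin.snoc (fun b : Fin 3 => f (Fin.natAdd 4 b)) k))

/-- The bracket on (the ambient space of) `𝔤 = 𝔰𝔩(V) ⊕ Λ⁴V`, an element of
which is represented as a pair `(A, T)` with `A` a matrix and `T` a 4-tensor. -/
def gBracket (x y : gl8 × T4) : gl8 × T4 :=
  (br00 x.1 y.1 + br11 x.2 y.2, br01 x.1 y.2 - br01 y.1 x.2)

/-- The subspace `𝔤 = 𝔰𝔩(V) ⊕ Λ⁴V` of the ambient space `𝔤𝔩(V) × ⊗⁴V`: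
traceless first component and alternating second component. -/
def gSub : Submodule ℂ (gl8 × T4) where
  carrier := {x | Matrix.trace x.1 = 0 ∧ IsAlt x.2}
  add_mem' := by
    rintro x y ⟨hx1, hx2⟩ ⟨hy1, hy2⟩
    refine ⟨by simp [Matrix.trace_add, hx1, hy1], fun σ v => ?_⟩
    simp only [Prod.snd_add, Pi.add_apply]
    rw [hx2 σ v, hy2 σ v]; ring
  zero_mem' := ⟨by simp, fun σ v => by simp⟩
  smul_mem' := by
    rintro c x ⟨hx1, hx2⟩
    refine ⟨by simp [Matrix.trace_smul, hx1], fun σ v => ?_⟩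
    simp only [Prod.smul_snd, Pi.smul_apply, smul_eq_mul]
    rw [hx2 σ v]; ring

/-- The adjoint action of a four-vector `t ∈ 𝔤₁` on `𝔤`. -/
def adT (t : T4) : gl8 × T4 → gl8 × T4 := fun y => gBracket ((0 : gl8), t) y

/-- The adjoint action of a matrix `A ∈ 𝔤₀` on `𝔤`. -/
def adM (A : gl8) : gl8 × T4 → gl8 × T4 := fun y => gBracket (A, (0 : T4)) y

/-- A four-vector `t` is a nilpotent element of `𝔤`:
`ad t : 𝔤 → 𝔤` is a nilpotent endomorphism. -/
def IsNilpotentFour (t : T4) : Prop :=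
  ∃ n : ℕ, ∀ y ∈ gSub, (adT t)^[n] y = 0

/-- A four-vector `t` is a semisimple element of `𝔤`: `ad t : 𝔤 → 𝔤` is a
diagonalizable endomorphism, i.e. `𝔤` is spanned by eigenvectors of `ad t`. -/
def IsSemisimpleFour (t : T4) : Prop :=
  ∃ (n : ℕ) (v : Fin n → gl8 × T4) (μ : Fin n → ℂ),
    (∀ i, v i ∈ gSub) ∧ Submodule.span ℂ (Set.range v) = gSub ∧
      ∀ i, adT t (v i) = μ i • v i

/-- A matrix `A ∈ 𝔤₀` is a semisimple element of `𝔤`: `ad A : 𝔤 → 𝔤` is a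
diagonalizable endomorphism. -/
def IsSemisimpleMat (A : gl8) : Prop :=
  ∃ (n : ℕ) (v : Fin n → gl8 × T4) (μ : Fin n → ℂ),
    (∀ i, v i ∈ gSub) ∧ Submodule.span ℂ (Set.range v) = gSub ∧
      ∀ i, adM A (v i) = μ i • v i

/-- The four-vector `e_{w(1)} ∧ e_{w(2)} ∧ e_{w(3)} ∧ e_{w(4)}`, as an
alternating 4-tensor. -/
def wedge4 (w : Fin 4 → Fin 8) : T4 :=
  fun v => Matrix.det (Matrix.of fun a b : Fin 4 => if w a = v b then (1 : ℂ) else 0)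

/-- The semisimple four-vector `p(s)` associated to a permutation `s` of the
eight indices. -/
def pvec (s : Equiv.Perm (Fin 8)) : T4 :=
  wedge4 (fun a : Fin 4 => s (Fin.castAdd 4 a)) +
    wedge4 (fun a : Fin 4 => s (Fin.natAdd 4 a))

/-- Antonyan's seven four-vectors `p₁,…,p₇` (with indices shifted to `0,…,7`):
`p₁ = p(1234 5678)`, `p₂ = p(1357 6824)`, `p₃ = p(1562 8437)`, `p₄ = p(1683 4752)`,
`p₅ = p(1845 7263)`, `p₆ = p(1476 2385)`, `p₇ = p(1728 3546)`. -/
def P : Fin 7 → T4 :=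
  ![wedge4 ![0, 1, 2, 3] + wedge4 ![4, 5, 6, 7],
    wedge4 ![0, 2, 4, 6] + wedge4 ![5, 7, 1, 3],
    wedge4 ![0, 4, 5, 1] + wedge4 ![7, 3, 2, 6],
    wedge4 ![0, 5, 7, 2] + wedge4 ![3, 6, 4, 1],
    wedge4 ![0, 7, 3, 4] + wedge4 ![6, 1, 5, 2],
    wedge4 ![0, 3, 6, 5] + wedge4 ![1, 2, 7, 4],
    wedge4 ![0, 6, 1, 7] + wedge4 ![2, 4, 3, 5]]

/-- The Cartan subspace `𝔠 = span(p₁,…,p₇) ⊂ Λ⁴V`. -/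
def cSpan : Submodule ℂ T4 := Submodule.span ℂ (Set.range P)

/-- The Cartan subspace `𝔠`, viewed inside `𝔤`. -/
def cG : Submodule ℂ (gl8 × T4) :=
  Submodule.span ℂ (Set.range fun i : Fin 7 => (((0 : gl8), P i) : gl8 × T4))

/-- The natural action of `g ∈ GL(V)` on `⊗⁴V` (restricting to `Λ⁴g` on `Λ⁴V`). -/
def gact (g : gl8) (T : T4) : T4 :=
  fun v => ∑ w : Fin 4 → Fin 8, (∏ a : Fin 4, g (v a) (w a)) * T w

abbrev SL8 := Matrix.SpecialLinearGroup (Fin 8) ℂ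

/-- The subspace of alternating 4-tensors, i.e. `Λ⁴V ⊂ ⊗⁴V`. -/
def AltSub : Submodule ℂ T4 where
  carrier := {T | IsAlt T}
  add_mem' := by
    intro S T hS hT σ v
    simp only [Pi.add_apply]
    rw [hS σ v, hT σ v]; ring
  zero_mem' := fun σ v => by simp
  smul_mem' := by
    intro c S hS σ v
    simp only [Pi.smul_apply, smul_eq_mul]
    rw [hS σ v]; ring

/-- The diagonal traceless matrices, viewed inside `𝔤`. -/
def dG : Submodule ℂ (gl8 × T4) where
  carrier := {x | (∀ i j : Fin 8, i ≠ j → x.1 i j = 0) ∧ Matrix.trace x.1 = 0 ∧ x.2 = 0}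
  add_mem' := by
    rintro x y ⟨hx0, hx1, hx2⟩ ⟨hy0, hy1, hy2⟩
    refine ⟨fun i j hij => ?_, ?_, ?_⟩
    · simp [Matrix.add_apply, hx0 i j hij, hy0 i j hij]
    · simp [Matrix.trace_add, hx1, hy1]
    · simp [hx2, hy2]
  zero_mem' := ⟨fun i j _ => rfl, by simp, rfl⟩
  smul_mem' := by
    rintro c x ⟨hx0, hx1, hx2⟩
    refine ⟨fun i j hij => ?_, ?_, ?_⟩
    · simp [Matrix.smul_apply, hx0 i j hij]
    · simp [Matrix.trace_smul, hx1]
    · simp [hx2]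

/-- A Cartan subspace of `𝔤₁ = Λ⁴V`: a maximal linear subspace of `Λ⁴V`
consisting of pairwise commuting semisimple elements of `𝔤`. -/
def IsCartanSubspace (c : Submodule ℂ T4) : Prop :=
  c ≤ AltSub ∧ (∀ x ∈ c, IsSemisimpleFour x) ∧ (∀ x ∈ c, ∀ y ∈ c, br11 x y = 0) ∧
    ∀ c' : Submodule ℂ T4, c' ≤ AltSub → (∀ x ∈ c', IsSemisimpleFour x) →
      (∀ x ∈ c', ∀ y ∈ c', br11 x y = 0) → c ≤ c' → c' = c

/-- The traceless matrices `𝔰𝔩₈(ℂ)`, as the kernel of the trace. -/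
def trKer : Submodule ℂ gl8 := LinearMap.ker (Matrix.traceLinearMap (Fin 8) ℂ ℂ)

/-- The derivation action `X ↦ X·T` on a fixed 4-tensor `T`, as a linear map in `X`. -/
def actL (T : T4) : gl8 →ₗ[ℂ] T4 where
  toFun X := br01 X T
  map_add' X Y := by
    funext v
    simp [br01, Matrix.add_apply, add_mul, Finset.sum_add_distrib]
  map_smul' c X := by
    funext v
    simp [br01, Matrix.smul_apply, smul_eq_mul, Finset.mul_sum, mul_assoc]

abbrev T2 : Type := (Fin 2 → Fin 8) → ℂ

/-- The bivector `e_i ∧ e_j = e_i ⊗ e_j − e_j ⊗ e_i`, in coordinates. -/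
def wedge2 (i j : Fin 8) : T2 :=
  fun v => (if v 0 = i ∧ v 1 = j then (1 : ℂ) else 0) - (if v 0 = j ∧ v 1 = i then 1 else 0)

/-- The wedge product `Λ²V × Λ²V → Λ⁴V ⊂ ⊗⁴V`, in coordinates (for the
embedding convention `v₁∧…∧v₄ = Σ_σ sgn σ v_{σ(1)}⊗…⊗v_{σ(4)}`). -/
def wedge22 (S T : T2) : T4 :=
  fun v => (4 : ℂ)⁻¹ * ∑ σ : Equiv.Perm (Fin 4),
    sgn σ * (S (fun a : Fin 2 => v (σ (Fin.castAdd 2 a))) *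
      T (fun a : Fin 2 => v (σ (Fin.natAdd 2 a))))

/-- The nondegenerate bivector `ω = e₁∧e₂ + e₃∧e₄ + e₅∧e₆ + e₇∧e₈`. -/
def omega2 : T2 := wedge2 0 1 + wedge2 2 3 + wedge2 4 5 + wedge2 6 7

/-- The four-vector `ω ∧ ω`. -/
def omegaSq : T4 := wedge22 omega2 omega2

/-- The matrix of the skew form `B = e¹∧e² + e³∧e⁴ + e⁵∧e⁶ + e⁷∧e⁸`. -/
def Bmat : gl8 :=
  Matrix.of fun i j : Fin 8 =>
    if (i : ℕ) % 2 = 0 ∧ (j : ℕ) = (i : ℕ) + 1 then (1 : ℂ)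
    else if (j : ℕ) % 2 = 0 ∧ (i : ℕ) = (j : ℕ) + 1 then -1 else 0

/-- The semisimple four-vector `p₁ = e₁∧e₂∧e₃∧e₄ + e₅∧e₆∧e₇∧e₈`. -/
def p1four : T4 := wedge4 ![0, 1, 2, 3] + wedge4 ![4, 5, 6, 7]

-- alternating tensors vanish on non-injective tuples
lemma isAlt_zero_of_not_inj {T : T4} (hT : IsAlt T) {v : Fin 4 → Fin 8}
    (hv : ¬ Function.Injective v) : T v = 0 := by
  simp only [Function.Injective, not_forall] at hv
  obtain ⟨i, j, hvij, hij⟩ := hv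
  have h1 := hT (Equiv.swap i j) v
  have h2 : v ∘ (Equiv.swap i j) = v := by
    funext a
    simp only [Function.comp]
    rcases eq_or_ne a i with rfl | hai
    · rw [Equiv.swap_apply_left, hvij]
    rcases eq_or_ne a j with rfl | haj
    · rw [Equiv.swap_apply_right, hvij]
    · rw [Equiv.swap_apply_of_ne_of_ne hai haj]
  rw [h2] at h1
  have hs : sgn (Equiv.swap i j) = -1 := by
    simp [sgn, Equiv.Perm.sign_swap hij]
  rw [hs] at h1
  linear_combination h1 / 2

lemma wedge4_isAlt (w : Fin 4 → Fin 8) : IsAlt (wedge4 w) := by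
  intro σ v
  have : (Matrix.of fun a b : Fin 4 => if w a = (v ∘ σ) b then (1 : ℂ) else 0)
      = (Matrix.of fun a b : Fin 4 => if w a = v b then (1 : ℂ) else 0).submatrix id σ := rfl
  rw [wedge4, this, Matrix.det_permute']
  simp [wedge4, sgn]

lemma wedge4_zero_of_not_range {w v : Fin 4 → Fin 8} (a : Fin 4)
    (h : ∀ b, w a ≠ v b) : wedge4 w v = 0 := by
  apply Matrix.det_eq_zero_of_row_eq_zero a
  intro b
  simp [Matrix.of_apply, h b]

lemma wedge4_self_perm {w : Fin 4 → Fin 8} (hw : Function.Injective w)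
    (σ : Equiv.Perm (Fin 4)) : wedge4 w (w ∘ σ) = sgn σ := by
  have : (Matrix.of fun a b : Fin 4 => if w a = (w ∘ σ) b then (1 : ℂ) else 0)
      = ((σ⁻¹ : Equiv.Perm (Fin 4)).permMatrix ℂ) := by
    ext a b
    rw [Equiv.Perm.permMatrix, PEquiv.toMatrix_apply, Equiv.toPEquiv_apply]
    simp only [Matrix.of_apply, Option.mem_def, Option.some.injEq, Function.comp]
    by_cases h : w a = w (σ b)
    · rw [if_pos h, if_pos]
      rw [hw h]
      simp
    · rw [if_neg h, if_neg]
      intro hc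
      apply h
      rw [← hc]
      simp
  rw [wedge4, this, Matrix.det_permutation]
  simp [sgn]

abbrev S4 : Type := {s : Finset (Fin 8) // s.card = 4}

def incl (s : S4) : Fin 4 → Fin 8 := fun a => (s.1.orderIsoOfFin s.2 a : Fin 8)

lemma incl_injective (s : S4) : Function.Injective (incl s) := by
  intro a b h
  exact (s.1.orderIsoOfFin s.2).injective (Subtype.ext h)

lemma incl_mem (s : S4) (a : Fin 4) : incl s a ∈ s.1 := (s.1.orderIsoOfFin s.2 a).2

-- every element of s is in the range of incl s
lemma incl_surj (s : S4) {x : Fin 8} (hx : x ∈ s.1) : ∃ a, incl s a = x := by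
  obtain ⟨a, ha⟩ := (s.1.orderIsoOfFin s.2).surjective ⟨x, hx⟩
  exact ⟨a, congrArg Subtype.val ha⟩

def Fmap : AltSub →ₗ[ℂ] (S4 → ℂ) where
  toFun T := fun s => T.1 (incl s)
  map_add' T₁ T₂ := rfl
  map_smul' c T := rfl

def Gmap : (S4 → ℂ) →ₗ[ℂ] AltSub where
  toFun f := ⟨fun v => ∑ s : S4, f s * wedge4 (incl s) v, by
    intro σ v
    rw [Finset.mul_sum]
    apply Finset.sum_congr rfl
    intro s _
    rw [wedge4_isAlt (incl s) σ v]; ring⟩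
  map_add' f g := by
    apply Subtype.ext
    funext v
    simp [add_mul, Finset.sum_add_distrib]
  map_smul' c f := by
    apply Subtype.ext
    funext v
    simp [Finset.mul_sum, mul_assoc]

lemma FG : ∀ f, Fmap (Gmap f) = f := by
  intro f
  funext s
  show ∑ t : S4, f t * wedge4 (incl t) (incl s) = f s
  rw [Finset.sum_eq_single s]
  · have h1 : wedge4 (incl s) (incl s) = sgn 1 := wedge4_self_perm (incl_injective s) 1
    rw [h1]
    simp [sgn]
  · intro t _ hts
    have : ∃ x ∈ t.1, x ∉ s.1 := by
      by_contra hc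
      push_neg at hc
      have : t.1 = s.1 := Finset.eq_of_subset_of_card_le hc (by rw [t.2, s.2])
      exact hts (Subtype.ext this)
    obtain ⟨x, hxt, hxs⟩ := this
    obtain ⟨a, ha⟩ := incl_surj t hxt
    rw [wedge4_zero_of_not_range a (fun b hb => hxs (by rw [← ha, hb]; exact incl_mem s b))]
    ring
  · intro hs
    exact absurd (Finset.mem_univ s) hs

lemma GF : ∀ T, Gmap (Fmap T) = T := by
  intro T
  apply Subtype.ext
  funext v
  show ∑ s : S4, T.1 (incl s) * wedge4 (incl s) v = T.1 v
  by_cases hv : Function.Injective v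
  · set s0 : S4 := ⟨Finset.image v Finset.univ, by rw [Finset.card_image_of_injective _ hv]; simp⟩
    have hrange : ∀ a, ∃ b, v b = incl s0 a := by
      intro a
      have := incl_mem s0 a
      simp only [s0, Finset.mem_image, Finset.mem_univ, true_and] at this
      obtain ⟨b, hb⟩ := this
      exact ⟨b, hb⟩
    -- construct σ with v = incl s0 ∘ σ
    have hbij : Function.Bijective (fun b => (⟨v b, by simp [s0]⟩ : {x // x ∈ s0.1})) := by
      rw [Fintype.bijective_iff_injective_and_card]
      constructor
      · intro a b h
        exact hv (congrArg Subtype.val h)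
      · rw [Fintype.card_fin, Fintype.card_coe, s0.2]
    let e2 : Fin 4 ≃ {x // x ∈ s0.1} := Equiv.ofBijective _ hbij
    let σ : Equiv.Perm (Fin 4) := e2.trans (s0.1.orderIsoOfFin s0.2).toEquiv.symm
    have hσ : incl s0 ∘ σ = v := by
      funext a
      show ((s0.1.orderIsoOfFin s0.2) ((s0.1.orderIsoOfFin s0.2).toEquiv.symm (e2 a)) : Fin 8) = v a
      rw [show ((s0.1.orderIsoOfFin s0.2) ((s0.1.orderIsoOfFin s0.2).toEquiv.symm (e2 a))) =
        (s0.1.orderIsoOfFin s0.2).toEquiv ((s0.1.orderIsoOfFin s0.2).toEquiv.symm (e2 a)) from rfl,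
        Equiv.apply_symm_apply]
      rfl
    rw [Finset.sum_eq_single s0]
    · rw [← hσ, wedge4_self_perm (incl_injective s0) σ, T.2 σ (incl s0)]
      ring
    · intro t _ hts
      have : ∃ x ∈ t.1, x ∉ s0.1 := by
        by_contra hc
        push_neg at hc
        have : t.1 = s0.1 := Finset.eq_of_subset_of_card_le hc (by rw [t.2, s0.2])
        exact hts (Subtype.ext this)
      obtain ⟨x, hxt, hxs⟩ := this
      obtain ⟨a, ha⟩ := incl_surj t hxt
      rw [wedge4_zero_of_not_range a ?_]
      · ring
      · intro b hb
        apply hxs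
        rw [← ha, hb]
        simp [s0]
    · intro hs
      exact absurd (Finset.mem_univ s0) hs
  · rw [isAlt_zero_of_not_inj T.2 hv]
    apply Finset.sum_eq_zero
    intro s _
    rw [isAlt_zero_of_not_inj (wedge4_isAlt (incl s)) hv]
    ring

def altEquiv : AltSub ≃ₗ[ℂ] (S4 → ℂ) :=
  LinearEquiv.ofLinear Fmap Gmap (LinearMap.ext fun f => FG f) (LinearMap.ext fun T => GF T)

lemma finrank_AltSub : Module.finrank ℂ AltSub = 70 := by
  rw [altEquiv.finrank_eq]
  rw [Module.finrank_pi]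
  rw [Fintype.card_finset_len]
  decide

-- rank of trKer
lemma finrank_trKer : Module.finrank ℂ trKer = 63 := by
  have hsurj : LinearMap.range (Matrix.traceLinearMap (Fin 8) ℂ ℂ) = ⊤ := by
    rw [LinearMap.range_eq_top]
    intro c
    refine ⟨Matrix.diagonal (Pi.single 0 c), ?_⟩
    simp [Matrix.traceLinearMap, Matrix.trace_diagonal]
  have h := LinearMap.finrank_range_add_finrank_ker (Matrix.traceLinearMap (Fin 8) ℂ ℂ)
  rw [hsurj, finrank_top] at h
  have h1 : Module.finrank ℂ ℂ = 1 := Module.finrank_self ℂ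
  rw [h1] at h
  rw [Module.finrank_matrix] at h
  simp only [Fintype.card_fin, h1] at h
  have h2 : (1:ℕ) + Module.finrank ℂ trKer = 8 * 8 * 1 := h
  omega

def gEquiv : gSub ≃ₗ[ℂ] trKer × AltSub where
  toFun x := (⟨x.1.1, x.2.1⟩, ⟨x.1.2, x.2.2⟩)
  invFun y := ⟨(y.1.1, y.2.1), y.1.2, y.2.2⟩
  left_inv x := rfl
  right_inv y := rfl
  map_add' x y := rfl
  map_smul' c x := rfl

lemma finrank_gSub : Module.finrank ℂ gSub = 133 := by
  rw [gEquiv.finrank_eq, Module.finrank_prod, finrank_trKer, finrank_AltSub]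

lemma br01_zero (A : gl8) : br01 A 0 = 0 := by
  funext v; simp [br01]

lemma br11_zero_right (T : T4) : br11 T 0 = 0 := by
  ext k m; simp [br11]

lemma br01_diag (d : Fin 8 → ℂ) (T : T4) (v : Fin 4 → Fin 8) :
    br01 (Matrix.diagonal d) T v = (∑ a : Fin 4, d (v a)) * T v := by
  unfold br01
  rw [Finset.sum_mul]
  apply Finset.sum_congr rfl
  intro a _
  rw [Finset.sum_eq_single (v a)]
  · rw [Matrix.diagonal_apply_eq, Function.update_eq_self]
  · intro s _ hs
    rw [Matrix.diagonal_apply_ne d (Ne.symm hs), zero_mul]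
  · intro h; exact absurd (Finset.mem_univ _) h

lemma diag_mem_dG {d : Fin 8 → ℂ} (hd : ∑ i, d i = 0) :
    ((Matrix.diagonal d, (0 : T4)) : gl8 × T4) ∈ dG :=
  ⟨fun i j hij => Matrix.diagonal_apply_ne d hij, by rw [Matrix.trace_diagonal]; exact hd, rfl⟩

theorem statement2_aux :
    Module.finrank ℂ ↥gSub = 133 ∧
    dG ≤ gSub ∧
    (∀ x ∈ dG, ∀ y ∈ dG, gBracket x y = 0) ∧
    (∀ x ∈ gSub, (∀ y ∈ dG, gBracket x y ∈ dG) → x ∈ dG) := by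
  refine ⟨finrank_gSub, ?_, ?_, ?_⟩
  · rintro x ⟨hx0, hx1, hx2⟩
    exact ⟨hx1, by rw [hx2]; intro σ v; simp⟩
  · rintro x ⟨hx0, hx1, hx2⟩ y ⟨hy0, hy1, hy2⟩
    have hxd : x.1 = Matrix.diagonal fun i => x.1 i i := by
      ext i j
      rcases eq_or_ne i j with rfl | h
      · simp
      · rw [Matrix.diagonal_apply_ne _ h, hx0 i j h]
    have hyd : y.1 = Matrix.diagonal fun i => y.1 i i := by
      ext i j
      rcases eq_or_ne i j with rfl | h
      · simp
      · rw [Matrix.diagonal_apply_ne _ h, hy0 i j h]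
    have h1 : (gBracket x y).1 = 0 := by
      show br00 x.1 y.1 + br11 x.2 y.2 = 0
      rw [hx2, hy2, br11_zero_right, add_zero, br00, hxd, hyd,
        Matrix.diagonal_mul_diagonal, Matrix.diagonal_mul_diagonal, sub_eq_zero]
      exact congrArg Matrix.diagonal (funext fun i => mul_comm _ _)
    have h2 : (gBracket x y).2 = 0 := by
      show br01 x.1 y.2 - br01 y.1 x.2 = 0
      rw [hx2, hy2, br01_zero, br01_zero, sub_zero]
    exact Prod.ext h1 h2
  · rintro x ⟨hx1, hx2⟩ h
    refine ⟨?_, hx1, ?_⟩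
    · intro i j hij
      set d : Fin 8 → ℂ := Pi.single i 1 - Pi.single j 1 with hdd
      have hd : ∑ k, d k = 0 := by
        simp [hdd, Finset.sum_sub_distrib]
      have hm := (h _ (diag_mem_dG hd)).1 i j hij
      have he : (gBracket x (Matrix.diagonal d, (0:T4))).1
          = x.1 * Matrix.diagonal d - Matrix.diagonal d * x.1 + br11 x.2 0 := rfl
      rw [he, br11_zero_right, add_zero] at hm
      rw [Matrix.sub_apply, Matrix.mul_diagonal, Matrix.diagonal_mul] at hm
      have hdj : d j = -1 := by simp [hdd, Pi.single_apply, hij, Ne.symm hij]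
      have hdi : d i = 1 := by simp [hdd, Pi.single_apply, hij]
      rw [hdj, hdi] at hm
      linear_combination -hm / 2
    · funext v
      by_cases hv : Function.Injective v
      · set s : Finset (Fin 8) := Finset.image v Finset.univ with hs
        have hcard : s.card = 4 := by
          rw [hs, Finset.card_image_of_injective _ hv]; simp
        set d : Fin 8 → ℂ := fun k => if k ∈ s then 1 else -1 with hdd
        have hd : ∑ k, d k = 0 := by
          have : ∀ k, d k = (if k ∈ s then (2:ℂ) else 0) - 1 := by
            intro k
            by_cases h : k ∈ s <;> simp [hdd, h] <;> norm_num
          simp only [this, Finset.sum_sub_distrib, Finset.sum_ite_mem, Finset.univ_inter,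
            Finset.sum_const, hcard, Finset.card_univ, Fintype.card_fin]
          norm_num
        have hm := (h _ (diag_mem_dG hd)).2.2
        have he : (gBracket x (Matrix.diagonal d, (0:T4))).2
            = br01 x.1 0 - br01 (Matrix.diagonal d) x.2 := rfl
        rw [he, br01_zero, zero_sub, neg_eq_zero] at hm
        have hmv := congrFun hm v
        rw [br01_diag] at hmv
        have hsum : (∑ a : Fin 4, d (v a)) = 4 := by
          have : ∀ a : Fin 4, d (v a) = 1 := by
            intro a
            have : v a ∈ s := by simp [hs]
            simp [hdd, this]
          rw [Finset.sum_congr rfl fun a _ => this a]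
          simp
        rw [hsum] at hmv
        have := mul_eq_zero.mp hmv
        rcases this with h4 | hTv
        · norm_num at h4
        · exact hTv
      · exact isAlt_zero_of_not_inj hx2 hv

/-- The abelian subalgebra `𝔡 ⊂ 𝔤₀ = 𝔰𝔩(V)` of diagonal
(traceless) endomorphisms is a Cartan subalgebra of the 133-dimensional Lie
algebra `𝔤 = 𝔰𝔩(V) ⊕ Λ⁴V`: it is a subalgebra of `𝔤`, it is abelian (hence
nilpotent), and it is equal to its own normalizer in `𝔤`. -/
theorem statement2 :
    Module.finrank ℂ ↥gSub = 133 ∧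
    dG ≤ gSub ∧
    (∀ x ∈ dG, ∀ y ∈ dG, gBracket x y = 0) ∧
    (∀ x ∈ gSub, (∀ y ∈ dG, gBracket x y ∈ dG) → x ∈ dG) :=
  statement2_aux

end
end

section
/- Let s = (i₁ j₁ k₁ l₁ i₂ j₂ k₂ l₂) and s' = (i₁' j₁' k₁' l₁' i₂' j₂' k₂' l₂') be permutations of 1,…,8 that are transversal, i.e., the sets {i₁,j₁,k₁,l₁} and {i₁',j₁',k₁',l₁'} have exactly 2 elements in common. Then the four-vectors p(s) and p(s') commute: [p(s), p(s')] = 0 in 𝔤, where p(s) = e_{i₁}∧e_{j₁}∧e_{k₁}∧e_{l₁} + e_{i₂}∧e_{j₂}∧e_{k₂}∧e_{l₂}. -/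
/-!
Common setup: the ℤ/2-graded Lie algebra 𝔤 = 𝔰𝔩(V) ⊕ Λ⁴V for V = ℂ⁸,
following Antonyan.  Four-vectors are modeled as alternating 4-tensors in
⊗⁴V, i.e. functions `(Fin 4 → Fin 8) → ℂ`, via the embedding
`v₁∧v₂∧v₃∧v₄ = Σ_σ sgn σ · v_{σ(1)}⊗v_{σ(2)}⊗v_{σ(3)}⊗v_{σ(4)}`.
(All indices are shifted from `1,…,8` to `0,…,7`.)
-/

noncomputable section

open scoped BigOperators

lemma natAdd_inj (m n k : ℕ) : Function.Injective (Fin.natAdd m : Fin n → Fin (m + n)) := by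
  intro a b h
  have := congrArg Fin.val h
  simp only [Fin.coe_natAdd] at this
  exact Fin.ext (by omega)

lemma delta8_inj {g : Fin 8 → Fin 8} (h : delta8 g ≠ 0) : Function.Injective g := by
  intro i j hij
  by_contra hne
  apply h
  exact Matrix.det_zero_of_column_eq hne (fun k => by simp [Matrix.of_apply, hij])

lemma wedge4_mem {w v : Fin 4 → Fin 8} (h : wedge4 w v ≠ 0) (b : Fin 4) :
    v b ∈ Finset.image w Finset.univ := by
  by_contra hb
  apply h
  apply Matrix.det_eq_zero_of_column_eq_zero b
  intro a
  simp only [Matrix.of_apply]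
  rw [if_neg]
  intro hw
  exact hb (hw ▸ Finset.mem_image_of_mem w (Finset.mem_univ a))

/-- Key vanishing: if the images of `w` and `w'` share at least 2 elements,
each product term in the bracket sum vanishes. -/
lemma key_vanish {w w' : Fin 4 → Fin 8}
    (h2 : 2 ≤ (Finset.image w Finset.univ ∩ Finset.image w' Finset.univ).card)
    {f : Fin 7 → Fin 8} (hfinj : Function.Injective f) (k : Fin 8) :
    wedge4 w (fun a : Fin 4 => f (Fin.castAdd 3 a)) *
      wedge4 w' (Fin.snoc (fun b : Fin 3 => f (Fin.natAdd 4 b)) k) = 0 := by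
  by_cases h1 : wedge4 w (fun a : Fin 4 => f (Fin.castAdd 3 a)) = 0
  · rw [h1, zero_mul]
  by_cases hw' : wedge4 w' (Fin.snoc (fun b : Fin 3 => f (Fin.natAdd 4 b)) k) = 0
  · rw [hw', mul_zero]
  exfalso
  -- the first four values of `f` fill up the image of `w`
  have hmemA : ∀ a : Fin 4, f (Fin.castAdd 3 a) ∈ Finset.image w Finset.univ :=
    fun a => wedge4_mem h1 a
  have hmemB : ∀ b : Fin 3, f (Fin.natAdd 4 b) ∈ Finset.image w' Finset.univ := by
    intro b
    have := wedge4_mem hw' (Fin.castSucc b)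
    rwa [Fin.snoc_castSucc] at this
  set F : Finset (Fin 8) := Finset.image (fun a : Fin 4 => f (Fin.castAdd 3 a)) Finset.univ
  set G : Finset (Fin 8) := Finset.image (fun b : Fin 3 => f (Fin.natAdd 4 b)) Finset.univ
  have hFsub : F ⊆ Finset.image w Finset.univ := by
    intro x hx
    obtain ⟨a, -, rfl⟩ := Finset.mem_image.mp hx
    exact hmemA a
  have hFcard : F.card = 4 := by
    rw [Finset.card_image_of_injective _ (fun a b hab => by
      have : Fin.castAdd 3 a = Fin.castAdd 3 b := hfinj hab
      exact Fin.castAdd_injective _ _ this)]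
    simp
  have hwF : Finset.image w Finset.univ = F := by
    apply (Finset.eq_of_subset_of_card_le hFsub ?_).symm
    calc (Finset.image w Finset.univ).card ≤ (Finset.univ : Finset (Fin 4)).card :=
          Finset.card_image_le
      _ = 4 := by simp
      _ = F.card := hFcard.symm
  have hGsub : G ⊆ Finset.image w' Finset.univ := by
    intro x hx
    obtain ⟨b, -, rfl⟩ := Finset.mem_image.mp hx
    exact hmemB b
  have hGcard : G.card = 3 := by
    rw [Finset.card_image_of_injective _ (fun a b hab => by
      have : Fin.natAdd 4 a = Fin.natAdd 4 b := hfinj hab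
      exact natAdd_inj _ _ 0 this)]
    simp
  -- the 2-element intersection must meet the 3-element set G
  set S := Finset.image w Finset.univ ∩ Finset.image w' Finset.univ
  have hsd : (S \ G).card ≤ 1 := by
    have h1' : S \ G ⊆ Finset.image w' Finset.univ \ G :=
      Finset.sdiff_subset_sdiff Finset.inter_subset_right (le_refl G)
    have h2' : (Finset.image w' Finset.univ \ G).card =
        (Finset.image w' Finset.univ).card - G.card := Finset.card_sdiff_of_subset hGsub
    have h3' : (Finset.image w' Finset.univ).card ≤ 4 := by
      calc (Finset.image w' Finset.univ).card ≤ (Finset.univ : Finset (Fin 4)).card :=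
            Finset.card_image_le
        _ = 4 := by simp
    have := Finset.card_le_card h1'
    omega
  have hSG : (S ∩ G).Nonempty := by
    rw [← Finset.card_pos]
    have hcover : S ⊆ (S \ G) ∪ (S ∩ G) := by
      intro x hx
      by_cases hxG : x ∈ G
      · exact Finset.mem_union_right _ (Finset.mem_inter.mpr ⟨hx, hxG⟩)
      · exact Finset.mem_union_left _ (Finset.mem_sdiff.mpr ⟨hx, hxG⟩)
    have := Finset.card_le_card hcover
    have := Finset.card_union_le (S \ G) (S ∩ G)
    omega
  obtain ⟨x, hx⟩ := hSG
  rw [Finset.mem_inter] at hx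
  have hxF : x ∈ F := by
    have : x ∈ Finset.image w Finset.univ := (Finset.mem_inter.mp hx.1).1
    rwa [hwF] at this
  obtain ⟨a, -, ha⟩ := Finset.mem_image.mp hxF
  obtain ⟨b, -, hb⟩ := Finset.mem_image.mp hx.2
  have : Fin.castAdd 3 a = Fin.natAdd 4 b := hfinj (by rw [ha, hb])
  have hva : (Fin.castAdd 3 a : Fin 7).1 = a.1 := rfl
  have hvb : (Fin.natAdd 4 b : Fin 7).1 = 4 + b.1 := rfl
  have := congrArg Fin.val this
  omega

/-- If the images of `w` and `w'` share at least 2 elements, the four-vectors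
`wedge4 w` and `wedge4 w'` commute. -/
lemma br11_wedge_eq_zero {w w' : Fin 4 → Fin 8}
    (h2 : 2 ≤ (Finset.image w Finset.univ ∩ Finset.image w' Finset.univ).card) :
    br11 (wedge4 w) (wedge4 w') = 0 := by
  ext k m
  simp only [br11, Matrix.of_apply, Matrix.zero_apply]
  rw [Finset.sum_eq_zero, mul_zero]
  intro f _
  by_cases hδ : delta8 (Fin.snoc f m) = 0
  · rw [hδ, zero_mul]
  have hinj : Function.Injective (Fin.snoc f m : Fin 8 → Fin 8) := delta8_inj hδ
  have hfinj : Function.Injective f := by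
    intro i j hij
    have h' : (Fin.snoc f m : Fin 8 → Fin 8) (Fin.castSucc i) =
        (Fin.snoc f m : Fin 8 → Fin 8) (Fin.castSucc j) := by
      rw [Fin.snoc_castSucc, Fin.snoc_castSucc]; exact hij
    exact Fin.castSucc_injective _ (hinj h')
  rw [key_vanish h2 hfinj k, key_vanish (by rwa [Finset.inter_comm]) hfinj k,
    sub_zero, mul_zero]

lemma br11_add_add (a b c d : T4) :
    br11 (a + b) (c + d) = br11 a c + br11 a d + br11 b c + br11 b d := by
  ext k m
  simp only [br11, Matrix.add_apply, Matrix.of_apply, Pi.add_apply]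
  simp only [← mul_add, ← Finset.sum_add_distrib]
  congr 1
  apply Finset.sum_congr rfl
  intro f _
  ring

lemma perm_partition (s : Equiv.Perm (Fin 8)) :
    Disjoint (Finset.image (fun a : Fin 4 => s (Fin.castAdd 4 a)) Finset.univ)
      (Finset.image (fun a : Fin 4 => s (Fin.natAdd 4 a)) Finset.univ) ∧
    Finset.image (fun a : Fin 4 => s (Fin.castAdd 4 a)) Finset.univ ∪
      Finset.image (fun a : Fin 4 => s (Fin.natAdd 4 a)) Finset.univ = Finset.univ ∧
    (Finset.image (fun a : Fin 4 => s (Fin.castAdd 4 a)) Finset.univ).card = 4 ∧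
    (Finset.image (fun a : Fin 4 => s (Fin.natAdd 4 a)) Finset.univ).card = 4 := by
  refine ⟨?_, ?_, ?_, ?_⟩
  · rw [Finset.disjoint_left]
    intro x hx hx'
    obtain ⟨a, -, ha⟩ := Finset.mem_image.mp hx
    obtain ⟨b, -, hb⟩ := Finset.mem_image.mp hx'
    have : Fin.castAdd 4 a = Fin.natAdd 4 b := s.injective (by rw [ha, hb])
    have := congrArg Fin.val this
    have h1 : (Fin.castAdd 4 a : Fin 8).1 = a.1 := rfl
    have h2 : (Fin.natAdd 4 b : Fin 8).1 = 4 + b.1 := rfl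
    omega
  · apply Finset.eq_univ_iff_forall.mpr
    intro j
    set i := s.symm j with hi
    have hj : j = s i := by rw [hi, Equiv.apply_symm_apply]
    by_cases hlt : i.1 < 4
    · apply Finset.mem_union_left
      apply Finset.mem_image.mpr
      refine ⟨⟨i.1, hlt⟩, Finset.mem_univ _, ?_⟩
      have heq : Fin.castAdd 4 ⟨i.1, hlt⟩ = i := Fin.ext rfl
      rw [heq]; exact hj.symm
    · apply Finset.mem_union_right
      apply Finset.mem_image.mpr
      have hi8 : i.1 < 8 := i.isLt
      have hb4 : i.1 - 4 < 4 := by omega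
      refine ⟨⟨i.1 - 4, hb4⟩, Finset.mem_univ _, ?_⟩
      have heq : Fin.natAdd 4 ⟨i.1 - 4, hb4⟩ = i :=
        Fin.ext (by show 4 + (i.1 - 4) = i.1; omega)
      rw [heq]; exact hj.symm
  · rw [Finset.card_image_of_injective _ (fun a b hab =>
      Fin.castAdd_injective _ _ (s.injective hab))]
    simp
  · rw [Finset.card_image_of_injective _ (fun a b hab =>
      natAdd_inj _ _ 0 (s.injective hab))]
    simp

lemma card_inter_partner {A B X : Finset (Fin 8)} (hAB : Disjoint A B)
    (hU : A ∪ B = Finset.univ) (hX : X.card = 4) (h : (X ∩ A).card = 2) :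
    (X ∩ B).card = 2 := by
  have h1 : (X ∩ A) ∪ (X ∩ B) = X := by
    rw [← Finset.inter_union_distrib_left, hU, Finset.inter_univ]
  have h2 : Disjoint (X ∩ A) (X ∩ B) :=
    hAB.mono Finset.inter_subset_right Finset.inter_subset_right
  have h3 := Finset.card_union_of_disjoint h2
  rw [h1] at h3
  omega

/-- If the permutations `s` and `s'` are transversal (their
leading 4-element index sets share exactly 2 elements), then the four-vectors
`p(s)` and `p(s')` commute in `𝔤`: `[p(s), p(s')] = 0`. -/
theorem statement5 :
    ∀ s s' : Equiv.Perm (Fin 8),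
      (Finset.image (fun a : Fin 4 => s (Fin.castAdd 4 a)) Finset.univ ∩
        Finset.image (fun a : Fin 4 => s' (Fin.castAdd 4 a)) Finset.univ).card = 2 →
      br11 (pvec s) (pvec s') = 0 := by
  intro s s' hcard
  obtain ⟨hd, hu, hcA, hcB⟩ := perm_partition s
  obtain ⟨hd', hu', hcA', hcB'⟩ := perm_partition s'
  set A := Finset.image (fun a : Fin 4 => s (Fin.castAdd 4 a)) Finset.univ
  set B := Finset.image (fun a : Fin 4 => s (Fin.natAdd 4 a)) Finset.univ
  set A' := Finset.image (fun a : Fin 4 => s' (Fin.castAdd 4 a)) Finset.univ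
  set B' := Finset.image (fun a : Fin 4 => s' (Fin.natAdd 4 a)) Finset.univ
  have hAB' : (A ∩ B').card = 2 := card_inter_partner hd' hu' hcA hcard
  have hBA' : (B ∩ A').card = 2 := by
    have : (A' ∩ B).card = 2 := by
      apply card_inter_partner hd hu hcA'
      rwa [Finset.inter_comm]
    rwa [Finset.inter_comm]
  have hBB' : (B ∩ B').card = 2 := card_inter_partner hd' hu' hcB hBA'
  show br11 (wedge4 _ + wedge4 _) (wedge4 _ + wedge4 _) = 0
  rw [br11_add_add,
    br11_wedge_eq_zero (by rw [hcard]),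
    br11_wedge_eq_zero (by rw [hAB']),
    br11_wedge_eq_zero (by rw [hBA']),
    br11_wedge_eq_zero (by rw [hBB'])]
  simp

end
end

section
/- The stabilizer subalgebra in 𝔰𝔩₈(ℂ) of the four-vector ω∧ω (where ω = e₁∧e₂ + e₃∧e₄ + e₅∧e₆ + e₇∧e₈) under the derivation action on Λ⁴ℂ⁸ equals the symplectic Lie algebra of the skew form B: {X ∈ 𝔰𝔩₈(ℂ) : X·(ω∧ω) = 0} = {X ∈ 𝔰𝔩₈(ℂ) : XᵀB + BX = 0}, where B is the 8×8 skew-symmetric matrix of the bilinear form e¹∧e² + e³∧e⁴ + e⁵∧e⁶ + e⁷∧e⁸; in particular this stabilizer has dimension 36 (it is the simple Lie algebra of type C₄). -/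
/-!
Common setup: the ℤ/2-graded Lie algebra 𝔤 = 𝔰𝔩(V) ⊕ Λ⁴V for V = ℂ⁸,
following Antonyan.  Four-vectors are modeled as alternating 4-tensors in
⊗⁴V, i.e. functions `(Fin 4 → Fin 8) → ℂ`, via the embedding
`v₁∧v₂∧v₃∧v₄ = Σ_σ sgn σ · v_{σ(1)}⊗v_{σ(2)}⊗v_{σ(3)}⊗v_{σ(4)}`.
(All indices are shifted from `1,…,8` to `0,…,7`.)
-/

noncomputable section

open scoped BigOperators

/-!
Writing `ω = ½ Σ B_ij e_i ∧ e_j`, the Leibniz rule gives `X·(ω∧ω) = 2 (X·ω) ∧ ω`, where `X·ω` is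
the bivector with coefficient matrix `XB + BXᵀ`. Wedging with `ω` is injective on bivectors in
dimension `n = 8`: contracting `E ∧ ω` with `B` gives `4((n - 4) E + ⟨E, B⟩ B)`, and contracting
once more gives a nonzero multiple of `⟨E, B⟩`. Hence the stabilizer is `{XB + BXᵀ = 0}`, which
conjugation by `B = -B⁻¹` turns into `XᵀB + BX = 0`; these matrices are automatically traceless,
and `X ↦ XB` maps them onto the symmetric matrices, of dimension `(8 + 1).choose 2 = 36`.
-/

open Matrix

theorem sum_perm_fin_succ {M : Type*} [AddCommMonoid M] {n : ℕ} (f : Equiv.Perm (Fin (n + 1)) → M) :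
    ∑ σ, f σ = ∑ p : Fin (n + 1), ∑ τ : Equiv.Perm (Fin n), f (Equiv.Perm.decomposeFin.symm (p, τ)) := by
  rw [← Fintype.sum_prod_type', ← Equiv.sum_comp Equiv.Perm.decomposeFin.symm]

section SkewWedge

variable {ι R : Type*} [CommRing R]

/-- `4 • wedge22 E F`, reading the matrices `E`, `F` as 2-tensors; for skew `E`, `F` these are
the bivectors `½ Σ E_ij e_i ∧ e_j` and `½ Σ F_ij e_i ∧ e_j`. -/
def skewWedge (E F : Matrix ι ι R) (v : Fin 4 → ι) : R :=
  ∑ σ : Equiv.Perm (Fin 4),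
    (Equiv.Perm.sign σ : R) * (E (v (σ 0)) (v (σ 1)) * F (v (σ 2)) (v (σ 3)))

theorem skewWedge_eq {E F : Matrix ι ι R} (hE : Eᵀ = -E) (hF : Fᵀ = -F) (v : Fin 4 → ι) :
    skewWedge E F v = 4 * (E (v 0) (v 1) * F (v 2) (v 3) - E (v 0) (v 2) * F (v 1) (v 3)
      + E (v 0) (v 3) * F (v 1) (v 2) + E (v 1) (v 2) * F (v 0) (v 3)
      - E (v 1) (v 3) * F (v 0) (v 2) + E (v 2) (v 3) * F (v 0) (v 1)) := by
  have hE' (a b : Fin 4) : E (v b) (v a) = -E (v a) (v b) := by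
    simpa using congrFun (congrFun hE (v a)) (v b)
  have hF' (a b : Fin 4) : F (v b) (v a) = -F (v a) (v b) := by
    simpa using congrFun (congrFun hF (v a)) (v b)
  simp only [skewWedge, sum_perm_fin_succ, Fin.sum_univ_succ, Finset.univ_unique,
    Finset.sum_singleton]
  -- `decomposeFin_symm_apply_succ` only fires on indices written as `Fin.succ _`
  simp only [show (2 : Fin 4) = Fin.succ 1 from rfl, show (3 : Fin 4) = Fin.succ 2 from rfl,
    show (1 : Fin 4) = Fin.succ 0 from rfl, show (2 : Fin 3) = Fin.succ 1 from rfl,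
    show (1 : Fin 3) = Fin.succ 0 from rfl, show (1 : Fin 2) = Fin.succ 0 from rfl,
    Equiv.Perm.decomposeFin_symm_apply_zero, Equiv.Perm.decomposeFin_symm_apply_succ,
    Equiv.Perm.decomposeFin.symm_sign]
  simp +decide only [↓reduceIte, Subsingleton.elim (default : Equiv.Perm (Fin 1)) 1,
    Equiv.Perm.sign_one, mul_one, Units.val_one, Int.cast_one, Fin.isValue, Nat.reduceAdd,
    Equiv.swap_self, Fin.succ_zero_eq_one, Equiv.refl_apply, Fin.succ_one_eq_two,
    Equiv.Perm.coe_one, id_eq, Fin.reduceSucc, one_mul, mul_neg, Units.val_neg, Int.reduceNeg,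
    Int.cast_neg, Fin.default_eq_zero, Equiv.swap_apply_right, neg_mul, Equiv.swap_apply_def,
    neg_neg]
  rw [hE' 0 1, hE' 0 2, hE' 0 3, hE' 1 2, hE' 1 3, hE' 2 3,
    hF' 0 1, hF' 0 2, hF' 0 3, hF' 1 2, hF' 1 3, hF' 2 3]
  ring

variable [Fintype ι] [DecidableEq ι]

theorem mul_transpose_eq_one_of_skew {J : Matrix ι ι R} (hJ : Jᵀ = -J) (hJ2 : J * J = -1) :
    J * Jᵀ = 1 := by
  rw [hJ, mul_neg, hJ2, neg_neg]

theorem sum_sum_mul_self_eq_card {J : Matrix ι ι R} (hJ : J * Jᵀ = 1) :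
    ∑ k, ∑ l, J k l * J k l = Fintype.card ι := by
  simpa [Matrix.trace, Matrix.mul_apply] using congrArg Matrix.trace hJ

theorem sum_mul_skewWedge {E J : Matrix ι ι R} (hE : Eᵀ = -E) (hJ : Jᵀ = -J) (hJ2 : J * J = -1)
    (i j : ι) :
    ∑ k, ∑ l, J k l * skewWedge E J ![i, j, k, l] =
      4 * ((Fintype.card ι - 4 : R) * E i j + (∑ k, ∑ l, J k l * E k l) * J i j) := by
  have hJJt := mul_transpose_eq_one_of_skew hJ hJ2
  have hEji : E j i = -E i j := by simpa using congrFun (congrFun hE i) j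
  have hEJJt (a b : ι) : ∑ k, ∑ l, E a k * (J k l * J b l) = E a b := by
    conv_rhs => rw [← mul_one E, ← hJJt]
    simp only [Matrix.mul_apply, Matrix.transpose_apply, Finset.mul_sum]
  have hEJJ (a b : ι) : ∑ k, ∑ l, E a l * (J b k * J k l) = -E a b := by
    rw [Finset.sum_comm]
    simp_rw [← Finset.mul_sum, ← Matrix.mul_apply, hJ2]
    simp [Matrix.one_apply]
  calc ∑ k, ∑ l, J k l * skewWedge E J ![i, j, k, l]
      = 4 * ∑ k, ∑ l, (E i j * (J k l * J k l) - E i k * (J k l * J j l)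
          + E i l * (J j k * J k l) + E j k * (J k l * J i l) - E j l * (J i k * J k l)
          + J i j * (J k l * E k l)) := by
        simp only [skewWedge_eq hE hJ, Finset.mul_sum]
        refine Fintype.sum_congr _ _ fun k => Fintype.sum_congr _ _ fun l => ?_
        simp only [Matrix.cons_val]
        ring
    _ = 4 * (E i j * ∑ k, ∑ l, J k l * J k l - ∑ k, ∑ l, E i k * (J k l * J j l)
          + ∑ k, ∑ l, E i l * (J j k * J k l) + ∑ k, ∑ l, E j k * (J k l * J i l)
          - ∑ k, ∑ l, E j l * (J i k * J k l) + J i j * ∑ k, ∑ l, J k l * E k l) := by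
        congr 1
        simp only [Finset.mul_sum, Finset.sum_add_distrib, Finset.sum_sub_distrib]
    _ = _ := by
        rw [sum_sum_mul_self_eq_card hJJt, hEJJt, hEJJ, hEJJt, hEJJ, hEji]
        ring

theorem eq_zero_of_forall_skewWedge_eq_zero [IsDomain R] [CharZero R] (hn : 4 < Fintype.card ι)
    {E J : Matrix ι ι R} (hE : Eᵀ = -E) (hJ : Jᵀ = -J) (hJ2 : J * J = -1)
    (h : ∀ v, skewWedge E J v = 0) : E = 0 := by
  set c := ∑ k, ∑ l, J k l * E k l
  have hcontr (i j : ι) : (Fintype.card ι - 4 : R) * E i j + c * J i j = 0 := by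
    have := sum_mul_skewWedge hE hJ hJ2 i j
    simp only [h, mul_zero, Finset.sum_const_zero] at this
    exact (mul_eq_zero.mp this.symm).resolve_left (by norm_num)
  have hc : (2 * Fintype.card ι - 4 : R) * c = 0 := by
    calc (2 * Fintype.card ι - 4 : R) * c
        = (Fintype.card ι - 4 : R) * c + c * ∑ k, ∑ l, J k l * J k l := by
          rw [sum_sum_mul_self_eq_card (mul_transpose_eq_one_of_skew hJ hJ2)]
          ring
      _ = ∑ i, ∑ j, J i j * ((Fintype.card ι - 4 : R) * E i j + c * J i j) := by
          simp only [c, Finset.mul_sum, ← Finset.sum_add_distrib]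
          exact Fintype.sum_congr _ _ fun k => Fintype.sum_congr _ _ fun l => by ring
      _ = 0 := by simp [hcontr]
  have hc0 : c = 0 := (mul_eq_zero.mp hc).resolve_left <| sub_ne_zero.mpr <| by
    exact_mod_cast (by omega : 2 * Fintype.card ι ≠ 4)
  ext i j
  have := hcontr i j
  rw [hc0, zero_mul, add_zero] at this
  exact (mul_eq_zero.mp this).resolve_left <| sub_ne_zero.mpr <| by exact_mod_cast hn.ne'

end SkewWedge

section SymmetricMatrices

variable (ι R : Type*) [CommRing R]

def symmetricMatrices : Submodule R (Matrix ι ι R) where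
  carrier := {A | A.IsSymm}
  add_mem' := IsSymm.add
  zero_mem' := isSymm_zero
  smul_mem' c _ h := h.smul c

def symmetricMatricesEquiv : symmetricMatrices ι R ≃ₗ[R] (Sym2 ι → R) where
  toFun A := Sym2.lift ⟨fun i j => (A : Matrix ι ι R) i j, fun i j => (A.2.apply i j).symm⟩
  map_add' A B := by
    ext s
    induction s using Sym2.ind with
    | _ i j => simp
  map_smul' c A := by
    ext s
    induction s using Sym2.ind with
    | _ i j => simp
  invFun f := ⟨Matrix.of fun i j => f s(i, j), IsSymm.ext fun i j => by simp [Sym2.eq_swap]⟩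
  left_inv A := by
    ext i j
    simp
  right_inv f := by
    ext s
    induction s using Sym2.ind with
    | _ i j => simp

theorem finrank_symmetricMatrices [Fintype ι] [DecidableEq ι] [StrongRankCondition R] :
    Module.finrank R (symmetricMatrices ι R) = (Fintype.card ι + 1).choose 2 := by
  rw [(symmetricMatricesEquiv ι R).finrank_eq, Module.finrank_fintype_fun_eq_card, Sym2.card]

end SymmetricMatrices

section Symplectic

variable {ι R : Type*} [Fintype ι] [CommRing R] {J : Matrix ι ι R}

/-- `X ↦ XJ + JXᵀ`: the derivation action of `X ∈ 𝔤𝔩(ι)` on the bivector with skew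
coefficient matrix `J`. -/
def bivectorAct (J : Matrix ι ι R) : Matrix ι ι R →ₗ[R] Matrix ι ι R where
  toFun X := X * J + J * Xᵀ
  map_add' X Y := by simp only [add_mul, transpose_add, mul_add]; abel
  map_smul' c X := by
    simp only [smul_mul, transpose_smul, Matrix.mul_smul, smul_add, RingHom.id_apply]

theorem bivectorAct_apply (X : Matrix ι ι R) : bivectorAct J X = X * J + J * Xᵀ := rfl

theorem transpose_bivectorAct (hJ : Jᵀ = -J) (X : Matrix ι ι R) :
    (bivectorAct J X)ᵀ = -bivectorAct J X := by
  simp only [bivectorAct_apply, transpose_add, transpose_mul, transpose_transpose, hJ]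
  noncomm_ring

variable [DecidableEq ι]

theorem bivectorAct_eq_zero_iff (hJ2 : J * J = -1) (X : Matrix ι ι R) :
    bivectorAct J X = 0 ↔ Xᵀ * J + J * X = 0 := by
  have conj (A B : Matrix ι ι R) : J * (A * J + J * B) * J = -(B * J + J * A) := by
    rw [show J * (A * J + J * B) * J = J * A * (J * J) + J * J * (B * J) by noncomm_ring, hJ2]
    noncomm_ring
  rw [bivectorAct_apply]
  constructor <;> intro h
  · rw [← neg_eq_zero, ← conj X Xᵀ, h, mul_zero, zero_mul]
  · rw [← neg_eq_zero, ← conj Xᵀ X, h, mul_zero, zero_mul]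

theorem trace_eq_zero_of_bivectorAct_eq_zero [IsAddTorsionFree R] (hJ2 : J * J = -1)
    {X : Matrix ι ι R} (hX : bivectorAct J X = 0) : trace X = 0 := by
  have hXJ : X = J * Xᵀ * J := by
    have := congrArg (· * J) hX
    simp only [bivectorAct_apply, add_mul, mul_assoc, hJ2, zero_mul] at this
    simpa [mul_assoc, add_eq_zero_iff_eq_neg] using this
  refine self_eq_neg.mp ?_
  conv_lhs => rw [hXJ]
  rw [trace_mul_comm, ← mul_assoc, hJ2, neg_one_mul, trace_neg, trace_transpose]

theorem map_mulRight_ker_bivectorAct (hJ : Jᵀ = -J) (hJ2 : J * J = -1) :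
    (LinearMap.ker (bivectorAct J)).map (LinearMap.mulRight R J) = symmetricMatrices ι R := by
  ext Y
  simp only [Submodule.mem_map, LinearMap.mem_ker, LinearMap.mulRight_apply, bivectorAct_apply]
  constructor
  · rintro ⟨X, hX, rfl⟩
    show (X * J)ᵀ = X * J
    rw [transpose_mul, hJ, neg_mul, eq_neg_of_add_eq_zero_left hX]
  · intro (hY : Yᵀ = Y)
    refine ⟨-(Y * J), ?_, by rw [neg_mul, mul_assoc, hJ2]; simp⟩
    rw [transpose_neg, transpose_mul, hY, hJ]
    simp only [neg_mul, mul_neg, neg_neg, mul_assoc, hJ2, ← mul_assoc J J Y]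
    simp

theorem finrank_ker_bivectorAct [StrongRankCondition R] (hJ : Jᵀ = -J) (hJ2 : J * J = -1) :
    Module.finrank R (LinearMap.ker (bivectorAct J)) = (Fintype.card ι + 1).choose 2 := by
  have hinj : Function.Injective (LinearMap.mulRight R J) := fun X Y h => by
    simpa [mul_assoc, hJ2] using congrArg (· * J) h
  rw [(Submodule.equivMapOfInjective _ hinj _).finrank_eq, map_mulRight_ker_bivectorAct hJ hJ2,
    finrank_symmetricMatrices]

end Symplectic

theorem Bmat_transpose : Bmatᵀ = -Bmat := by
  ext i j
  fin_cases i <;> fin_cases j <;> norm_num [Bmat]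

theorem Bmat_mul_self : Bmat * Bmat = -1 := by
  ext i j
  fin_cases i <;> fin_cases j <;>
    simp +decide [Matrix.mul_apply, Fin.sum_univ_eight, Bmat]

theorem omega2_apply (v : Fin 2 → Fin 8) : omega2 v = Bmat (v 0) (v 1) := by
  simp only [omega2, Pi.add_apply, wedge2]
  generalize v 0 = i
  generalize v 1 = j
  fin_cases i <;> fin_cases j <;> simp +decide [Bmat]

theorem omegaSq_eq : omegaSq = (4 : ℂ)⁻¹ • skewWedge Bmat Bmat := by
  funext v
  simp only [omegaSq, wedge22, omega2_apply, Pi.smul_apply, smul_eq_mul, skewWedge, sgn]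
  rfl

theorem br01_smul (X : gl8) (c : ℂ) (T : T4) : br01 X (c • T) = c • br01 X T := by
  funext v
  simp only [br01, Pi.smul_apply, smul_eq_mul, Finset.mul_sum]
  exact Fintype.sum_congr _ _ fun a => Fintype.sum_congr _ _ fun s => by ring

theorem br01_skewWedge_self (X J : gl8) (hJ : Jᵀ = -J) :
    br01 X (skewWedge J J) = (2 : ℂ) • skewWedge (bivectorAct J X) J := by
  funext v
  rw [Pi.smul_apply, skewWedge_eq (transpose_bivectorAct hJ X) hJ]
  simp +decide only [br01, skewWedge_eq hJ hJ, bivectorAct_apply, Fin.sum_univ_four,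
    Function.update_apply, if_true, if_false, smul_eq_mul, Matrix.add_apply, Matrix.mul_apply,
    Matrix.transpose_apply]
  simp only [add_mul, mul_add, mul_sub, Finset.mul_sum, Finset.sum_mul, ← Finset.sum_add_distrib,
    ← Finset.sum_sub_distrib]
  exact Finset.sum_congr rfl fun s _ => by ring

theorem br01_omegaSq (X : gl8) :
    br01 X omegaSq = (2 : ℂ)⁻¹ • skewWedge (bivectorAct Bmat X) Bmat := by
  rw [omegaSq_eq, br01_smul, br01_skewWedge_self X Bmat Bmat_transpose, smul_smul]
  norm_num

theorem br01_omegaSq_eq_zero_iff (X : gl8) : br01 X omegaSq = 0 ↔ bivectorAct Bmat X = 0 := by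
  rw [br01_omegaSq, smul_eq_zero_iff_right (by norm_num)]
  refine ⟨fun h => eq_zero_of_forall_skewWedge_eq_zero (by simp) (transpose_bivectorAct
    Bmat_transpose X) Bmat_transpose Bmat_mul_self (congrFun h), fun h => ?_⟩
  funext v
  simp [h, skewWedge]

/-- The stabilizer in `𝔰𝔩₈(ℂ)` of `ω∧ω` (for
`ω = e₁∧e₂ + e₃∧e₄ + e₅∧e₆ + e₇∧e₈`) under the derivation action on `Λ⁴ℂ⁸`
equals the symplectic Lie algebra `{X ∈ 𝔰𝔩₈ : XᵀB + BX = 0}` of the skew form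
`B`; in particular it has dimension 36 (the simple Lie algebra of type C₄). -/
theorem statement15 :
    {X : gl8 | Matrix.trace X = 0 ∧ br01 X omegaSq = 0} =
      {X : gl8 | Matrix.trace X = 0 ∧ Matrix.transpose X * Bmat + Bmat * X = 0} ∧
    Module.finrank ℂ ↥(trKer ⊓ LinearMap.ker (actL omegaSq)) = 36 := by
  refine ⟨Set.ext fun X => and_congr_right fun _ =>
    (br01_omegaSq_eq_zero_iff X).trans (bivectorAct_eq_zero_iff Bmat_mul_self X), ?_⟩
  have hstab : trKer ⊓ LinearMap.ker (actL omegaSq) = LinearMap.ker (bivectorAct Bmat) := by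
    ext X
    simp only [Submodule.mem_inf, LinearMap.mem_ker, trKer, Matrix.traceLinearMap_apply]
    change (_ ∧ br01 X omegaSq = 0) ↔ _
    rw [br01_omegaSq_eq_zero_iff]
    exact ⟨And.right, fun h => ⟨trace_eq_zero_of_bivectorAct_eq_zero Bmat_mul_self h, h⟩⟩
  rw [hstab, finrank_ker_bivectorAct Bmat_transpose Bmat_mul_self]
  rfl

end
end

section
/- The stabilizer subalgebra in 𝔰𝔩₈(ℂ) of the semisimple four-vector p₁ = e₁∧e₂∧e₃∧e₄ + e₅∧e₆∧e₇∧e₈ under the derivation action on Λ⁴ℂ⁸ is exactly the set of block-diagonal matrices diag(A, D) with A, D ∈ 𝔤𝔩₄(ℂ), tr A = 0 and tr D = 0 (blocks with respect to the decomposition ℂ⁸ = ⟨e₁,…,e₄⟩ ⊕ ⟨e₅,…,e₈⟩); in particular this stabilizer has dimension 30. -/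
/-!
Common setup: the ℤ/2-graded Lie algebra 𝔤 = 𝔰𝔩(V) ⊕ Λ⁴V for V = ℂ⁸,
following Antonyan.  Four-vectors are modeled as alternating 4-tensors in
⊗⁴V, i.e. functions `(Fin 4 → Fin 8) → ℂ`, via the embedding
`v₁∧v₂∧v₃∧v₄ = Σ_σ sgn σ · v_{σ(1)}⊗v_{σ(2)}⊗v_{σ(3)}⊗v_{σ(4)}`.
(All indices are shifted from `1,…,8` to `0,…,7`.)
-/

noncomputable section

open scoped BigOperators

namespace Stmt16

open Function

lemma wedge4_comp (w v : Fin 4 → Fin 8) (σ : Equiv.Perm (Fin 4)) :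
    wedge4 w (v ∘ σ) = sgn σ * wedge4 w v := by
  have h : (Matrix.of fun a b : Fin 4 => if w a = (v ∘ σ) b then (1:ℂ) else 0)
      = (Matrix.of fun a b : Fin 4 => if w a = v b then (1:ℂ) else 0).submatrix id σ := rfl
  rw [wedge4, h, Matrix.det_permute', wedge4, sgn]

lemma wedge4_eq_zero_col (w v : Fin 4 → Fin 8) (c : Fin 4) (h : ∀ a, w a ≠ v c) :
    wedge4 w v = 0 :=
  Matrix.det_eq_zero_of_column_eq_zero c (fun a => by simp [h a])

lemma wedge4_eq_zero_dup (w v : Fin 4 → Fin 8) {b c : Fin 4} (hbc : b ≠ c) (h : v b = v c) :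
    wedge4 w v = 0 :=
  Matrix.det_zero_of_column_eq hbc (fun a => by simp [h])

lemma wedge4_eq_zero_row (w v : Fin 4 → Fin 8) (a : Fin 4) (h : ∀ b, v b ≠ w a) :
    wedge4 w v = 0 :=
  Matrix.det_eq_zero_of_row_eq_zero a (fun b => by simp [Ne.symm (h b)])

lemma wedge4_self (w : Fin 4 → Fin 8) (hw : Function.Injective w) : wedge4 w w = 1 := by
  have h : (Matrix.of fun a b : Fin 4 => if w a = w b then (1:ℂ) else 0) = 1 := by
    ext a b
    by_cases hab : a = b
    · simp [hab, Matrix.one_apply]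
    · rw [Matrix.of_apply, if_neg (fun hh => hab (hw hh)), Matrix.one_apply_ne hab]
  rw [wedge4, h, Matrix.det_one]

def wL : Fin 4 → Fin 8 := Fin.castAdd 4
def wU : Fin 4 → Fin 8 := Fin.natAdd 4

lemma wL_inj : Function.Injective wL := by decide
lemma wU_inj : Function.Injective wU := by decide
lemma wL_range : ∀ x : Fin 8, (∃ a, wL a = x) ↔ (x:ℕ) < 4 := by decide
lemma wU_range : ∀ x : Fin 8, (∃ a, wU a = x) ↔ ¬ (x:ℕ) < 4 := by decide

lemma p1_eq : p1four = fun v => wedge4 wL v + wedge4 wU v := by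
  have h1 : ![(0 : Fin 8),1,2,3] = wL := by funext a; fin_cases a <;> rfl
  have h2 : ![(4:Fin 8),5,6,7] = wU := by funext a; fin_cases a <;> rfl
  funext v
  show wedge4 ![0,1,2,3] v + wedge4 ![4,5,6,7] v = _
  rw [h1, h2]

lemma p1_mixed {v : Fin 4 → Fin 8} {b c : Fin 4} (hb : (v b : ℕ) < 4)
    (hc : ¬ (v c : ℕ) < 4) : p1four v = 0 := by
  rw [p1_eq]
  have h1 : wedge4 wL v = 0 :=
    wedge4_eq_zero_col _ _ c (fun a h => hc ((wL_range (v c)).mp ⟨a, h⟩))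
  have h2 : wedge4 wU v = 0 :=
    wedge4_eq_zero_col _ _ b (fun a h => ((wU_range (v b)).mp ⟨a, h⟩) hb)
  simp [h1, h2]

lemma p1_dup {v : Fin 4 → Fin 8} {b c : Fin 4} (hbc : b ≠ c) (h : v b = v c) :
    p1four v = 0 := by
  rw [p1_eq]
  simp [wedge4_eq_zero_dup _ _ hbc h]

lemma p1_comp (v : Fin 4 → Fin 8) (σ : Equiv.Perm (Fin 4)) :
    p1four (v ∘ σ) = sgn σ * p1four v := by
  rw [p1_eq]
  simp only
  rw [wedge4_comp, wedge4_comp]; ring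

lemma p1_pureL {v : Fin 4 → Fin 8} (h : ∀ a, (v a : ℕ) < 4) :
    p1four v = wedge4 wL v := by
  rw [p1_eq]
  have h2 : wedge4 wU v = 0 :=
    wedge4_eq_zero_col _ _ 0 (fun a ha => ((wU_range (v 0)).mp ⟨a, ha⟩) (h 0))
  simp [h2]

lemma p1_pureU {v : Fin 4 → Fin 8} (h : ∀ a, ¬ (v a : ℕ) < 4) :
    p1four v = wedge4 wU v := by
  rw [p1_eq]
  have h1 : wedge4 wL v = 0 :=
    wedge4_eq_zero_col _ _ 0 (fun a ha => (h 0) ((wL_range (v 0)).mp ⟨a, ha⟩))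
  simp [h1]

end Stmt16
namespace Stmt16

lemma br01_apply (X : gl8) (T : T4) (v : Fin 4 → Fin 8) :
    br01 X T v = ∑ a : Fin 4, ∑ s : Fin 8, X (v a) s * T (Function.update v a s) := rfl

lemma fin4_two (a : Fin 4) : ∃ b : Fin 4, b ≠ a := by
  revert a; decide

lemma fin4_three (a c : Fin 4) : ∃ d : Fin 4, d ≠ a ∧ d ≠ c := by
  revert a c; decide

section Abstract

variable (w : Fin 4 → Fin 8) (Q : Fin 8 → Prop)
variable (hw : Function.Injective w) (hr : ∀ x, (∃ a, w a = x) ↔ Q x)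
variable (hpure : ∀ t : Fin 4 → Fin 8, (∀ a, Q (t a)) → p1four t = wedge4 w t)
variable (hmix : ∀ (t : Fin 4 → Fin 8) (b c : Fin 4), Q (t b) → ¬ Q (t c) → p1four t = 0)

include hw hr hpure hmix in
lemma collapse (X : gl8) (v : Fin 4 → Fin 8) (hv : Function.Injective v)
    (hvQ : ∀ a, Q (v a)) :
    br01 X p1four v = (∑ i, X (w i) (w i)) * wedge4 w v := by
  rw [br01_apply]
  have key : ∀ a : Fin 4, (∑ s : Fin 8, X (v a) s * p1four (Function.update v a s))
      = X (v a) (v a) * wedge4 w v := by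
    intro a
    rw [Finset.sum_eq_single (v a)]
    · rw [Function.update_eq_self, hpure v hvQ]
    · intro s _ hs
      have hz : p1four (Function.update v a s) = 0 := by
        by_cases hQs : Q s
        · have hall : ∀ b, Q (Function.update v a s b) := by
            intro b
            by_cases hb : b = a
            · rw [hb, Function.update_self]; exact hQs
            · rw [Function.update_of_ne hb]; exact hvQ b
          rw [hpure _ hall]
          by_cases hsr : ∃ b, v b = s
          · obtain ⟨b, hb⟩ := hsr
            have hba : b ≠ a := fun h => hs (by rw [← hb, h])
            refine wedge4_eq_zero_dup _ _ (Ne.symm hba) ?_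
            rw [Function.update_self, Function.update_of_ne hba, hb]
          · push_neg at hsr
            obtain ⟨i0, hi0⟩ := (hr (v a)).mpr (hvQ a)
            refine wedge4_eq_zero_row _ _ i0 ?_
            intro b
            by_cases hb : b = a
            · rw [hb, Function.update_self, hi0]; exact hs
            · rw [Function.update_of_ne hb, hi0]
              exact fun h => hb (hv h)
        · obtain ⟨b, hba⟩ := fin4_two a
          refine hmix _ b a ?_ ?_
          · rw [Function.update_of_ne hba]; exact hvQ b
          · rw [Function.update_self]; exact hQs
      rw [hz, mul_zero]
    · intro h; exact absurd (Finset.mem_univ _) h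
  rw [Finset.sum_congr rfl (fun a _ => key a), ← Finset.sum_mul]
  congr 1
  have h1 : ∑ a : Fin 4, X (v a) (v a) = ∑ x ∈ Finset.univ.image v, X x x := by
    rw [Finset.sum_image (fun x _ y _ h => hv h)]
  have h2 : ∑ i : Fin 4, X (w i) (w i) = ∑ x ∈ Finset.univ.image w, X x x := by
    rw [Finset.sum_image (fun x _ y _ h => hw h)]
  rw [h1, h2]
  congr 1
  refine Finset.eq_of_subset_of_card_le ?_ ?_
  · intro x hx
    simp only [Finset.mem_image] at hx ⊢
    obtain ⟨a, _, rfl⟩ := hx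
    obtain ⟨i, hi⟩ := (hr (v a)).mpr (hvQ a)
    exact ⟨i, Finset.mem_univ i, hi⟩
  · rw [Finset.card_image_of_injective _ hw, Finset.card_image_of_injective _ hv]

include hw hr hpure hmix in
lemma offblock (X : gl8) (i : Fin 8) (hi : ¬ Q i) (c : Fin 4) :
    br01 X p1four (Function.update w c i) = X i (w c) := by
  rw [br01_apply]
  rw [Finset.sum_eq_single c]
  · rw [Function.update_self]
    simp only [Function.update_idem]
    rw [Finset.sum_eq_single (w c)]
    · rw [Function.update_eq_self, hpure w (fun a => (hr _).mp ⟨a, rfl⟩),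
        wedge4_self w hw, mul_one]
    · intro s _ hs
      have hz : p1four (Function.update w c s) = 0 := by
        by_cases hQs : Q s
        · obtain ⟨b, hb⟩ := (hr s).mpr hQs
          have hbc : b ≠ c := fun h => hs (by rw [← hb, h])
          refine p1_dup (Ne.symm hbc) ?_
          rw [Function.update_self, Function.update_of_ne hbc, hb]
        · obtain ⟨b, hbc⟩ := fin4_two c
          refine hmix _ b c ?_ ?_
          · rw [Function.update_of_ne hbc]; exact (hr _).mp ⟨b, rfl⟩
          · rw [Function.update_self]; exact hQs
      rw [hz, mul_zero]
    · intro h; exact absurd (Finset.mem_univ _) h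
  · intro a _ hac
    refine Finset.sum_eq_zero (fun s _ => ?_)
    obtain ⟨d, hda, hdc⟩ := fin4_three a c
    have hz : p1four (Function.update (Function.update w c i) a s) = 0 := by
      refine hmix _ d c ?_ ?_
      · rw [Function.update_of_ne hda, Function.update_of_ne hdc]
        exact (hr _).mp ⟨d, rfl⟩
      · rw [Function.update_of_ne (Ne.symm hac), Function.update_self]
        exact hi
    rw [hz, mul_zero]
  · intro h; exact absurd (Finset.mem_univ _) h

end Abstract

lemma sgn_swap {b c : Fin 4} (hbc : b ≠ c) : sgn (Equiv.swap b c) = -1 := by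
  rw [sgn, Equiv.Perm.sign_swap hbc]
  norm_num

lemma br01_not_inj (X : gl8) (v : Fin 4 → Fin 8) (hv : ¬ Function.Injective v) :
    br01 X p1four v = 0 := by
  obtain ⟨b, c, heq, hbc⟩ := Function.not_injective_iff.mp hv
  rw [br01_apply]
  rw [← Finset.sum_subset (Finset.subset_univ ({b, c} : Finset (Fin 4)))]
  · rw [Finset.sum_pair hbc, ← Finset.sum_add_distrib]
    refine Finset.sum_eq_zero (fun s _ => ?_)
    have hswap : Function.update v b s = (Function.update v c s) ∘ (Equiv.swap b c) := by
      funext d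
      show Function.update v b s d = Function.update v c s (Equiv.swap b c d)
      rcases eq_or_ne d b with rfl | hdb
      · rw [Equiv.swap_apply_left, Function.update_self, Function.update_self]
      · rcases eq_or_ne d c with rfl | hdc
        · rw [Equiv.swap_apply_right, Function.update_of_ne hdb,
            Function.update_of_ne hbc, heq]
        · rw [Equiv.swap_apply_of_ne_of_ne hdb hdc, Function.update_of_ne hdb,
            Function.update_of_ne hdc]
    rw [hswap, p1_comp, sgn_swap hbc, heq]
    ring
  · intro a _ ha
    simp only [Finset.mem_insert, Finset.mem_singleton] at ha
    push_neg at ha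
    refine Finset.sum_eq_zero (fun s _ => ?_)
    have hz : p1four (Function.update v a s) = 0 := by
      refine p1_dup hbc ?_
      rw [Function.update_of_ne (Ne.symm ha.1), Function.update_of_ne (Ne.symm ha.2), heq]
    rw [hz, mul_zero]

lemma br01_mixed (X : gl8)
    (hX1 : ∀ i j : Fin 8, (i:ℕ) < 4 → ¬ (j:ℕ) < 4 → X i j = 0)
    (hX2 : ∀ i j : Fin 8, ¬ (i:ℕ) < 4 → (j:ℕ) < 4 → X i j = 0)
    (v : Fin 4 → Fin 8) (b c : Fin 4) (hb : (v b : ℕ) < 4) (hc : ¬ (v c : ℕ) < 4) :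
    br01 X p1four v = 0 := by
  have hbc : b ≠ c := fun h => hc (h ▸ hb)
  rw [br01_apply]
  refine Finset.sum_eq_zero (fun a _ => Finset.sum_eq_zero (fun s _ => ?_))
  rcases eq_or_ne a b with rfl | hab
  · by_cases hs : (s:ℕ) < 4
    · have hz : p1four (Function.update v a s) = 0 := by
        refine p1_mixed (b := a) (c := c) ?_ ?_
        · rw [Function.update_self]; exact hs
        · rw [Function.update_of_ne (Ne.symm hbc)]; exact hc
      rw [hz, mul_zero]
    · rw [hX1 (v a) s hb hs, zero_mul]
  · rcases eq_or_ne a c with rfl | hac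
    · by_cases hs : (s:ℕ) < 4
      · rw [hX2 (v a) s hc hs, zero_mul]
      · have hz : p1four (Function.update v a s) = 0 := by
          refine p1_mixed (b := b) (c := a) ?_ ?_
          · rw [Function.update_of_ne hab.symm]
            exact hb
          · rw [Function.update_self]; exact hs
        rw [hz, mul_zero]
    · have hz : p1four (Function.update v a s) = 0 := by
        refine p1_mixed (b := b) (c := c) ?_ ?_
        · rw [Function.update_of_ne (Ne.symm hab)]; exact hb
        · rw [Function.update_of_ne (Ne.symm hac)]; exact hc
      rw [hz, mul_zero]

end Stmt16
namespace Stmt16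

def QL : Fin 8 → Prop := fun x => (x:ℕ) < 4
def QU : Fin 8 → Prop := fun x => ¬ (x:ℕ) < 4

lemma hrL : ∀ x, (∃ a, wL a = x) ↔ QL x := wL_range
lemma hrU : ∀ x, (∃ a, wU a = x) ↔ QU x := wU_range
lemma hpureL : ∀ t : Fin 4 → Fin 8, (∀ a, QL (t a)) → p1four t = wedge4 wL t :=
  fun _ h => p1_pureL h
lemma hpureU : ∀ t : Fin 4 → Fin 8, (∀ a, QU (t a)) → p1four t = wedge4 wU t :=
  fun _ h => p1_pureU h
lemma hmixL : ∀ (t : Fin 4 → Fin 8) (b c : Fin 4), QL (t b) → ¬ QL (t c) → p1four t = 0 :=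
  fun _ _ _ hb hc => p1_mixed hb hc
lemma hmixU : ∀ (t : Fin 4 → Fin 8) (b c : Fin 4), QU (t b) → ¬ QU (t c) → p1four t = 0 :=
  fun _ b c hb hc => p1_mixed (b := c) (c := b) (not_not.mp hc) hb

lemma key_iff (X : gl8) :
    br01 X p1four = 0 ↔
      ((∀ i j : Fin 8, (((i:ℕ) < 4 ∧ 4 ≤ (j:ℕ)) ∨ ((j:ℕ) < 4 ∧ 4 ≤ (i:ℕ))) → X i j = 0) ∧
        (∑ i : Fin 4, X (Fin.castAdd 4 i) (Fin.castAdd 4 i)) = 0 ∧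
        (∑ i : Fin 4, X (Fin.natAdd 4 i) (Fin.natAdd 4 i)) = 0) := by
  constructor
  · intro h
    have happ : ∀ v, br01 X p1four v = 0 := fun v => congrFun h v
    refine ⟨?_, ?_, ?_⟩
    · rintro i j (⟨hi, hj⟩ | ⟨hj, hi⟩)
      · obtain ⟨c, hc⟩ := (wU_range j).mpr (by omega)
        have h2 := offblock wU QU wU_inj hrU hpureU hmixU X i
          (show ¬ QU i from fun hh => hh hi) c
        rw [happ, hc] at h2
        exact h2.symm
      · obtain ⟨c, hc⟩ := (wL_range j).mpr hj
        have h2 := offblock wL QL wL_inj hrL hpureL hmixL X i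
          (show ¬ QL i by simp only [QL]; omega) c
        rw [happ, hc] at h2
        exact h2.symm
    · have h2 := collapse wL QL wL_inj hrL hpureL hmixL X wL wL_inj
        (fun a => (hrL _).mp ⟨a, rfl⟩)
      rw [happ, wedge4_self wL wL_inj, mul_one] at h2
      exact h2.symm
    · have h2 := collapse wU QU wU_inj hrU hpureU hmixU X wU wU_inj
        (fun a => (hrU _).mp ⟨a, rfl⟩)
      rw [happ, wedge4_self wU wU_inj, mul_one] at h2
      exact h2.symm
  · rintro ⟨h0, h1, h2⟩
    have hX1 : ∀ i j : Fin 8, (i:ℕ) < 4 → ¬ (j:ℕ) < 4 → X i j = 0 :=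
      fun i j hi hj => h0 i j (Or.inl ⟨hi, by omega⟩)
    have hX2 : ∀ i j : Fin 8, ¬ (i:ℕ) < 4 → (j:ℕ) < 4 → X i j = 0 :=
      fun i j hi hj => h0 i j (Or.inr ⟨hj, by omega⟩)
    funext v
    show br01 X p1four v = 0
    by_cases hinj : Function.Injective v
    · by_cases hL : ∀ a, (v a : ℕ) < 4
      · rw [collapse wL QL wL_inj hrL hpureL hmixL X v hinj hL]
        rw [show (∑ i, X (wL i) (wL i)) = 0 from h1, zero_mul]
      · by_cases hU : ∀ a, ¬ (v a : ℕ) < 4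
        · rw [collapse wU QU wU_inj hrU hpureU hmixU X v hinj hU]
          rw [show (∑ i, X (wU i) (wU i)) = 0 from h2, zero_mul]
        · push_neg at hL hU
          obtain ⟨c, hc⟩ := hL
          obtain ⟨b, hb⟩ := hU
          exact br01_mixed X hX1 hX2 v b c hb (by omega)
    · exact br01_not_inj X v hinj

lemma trace_split (X : gl8) : Matrix.trace X =
    (∑ i : Fin 4, X (Fin.castAdd 4 i) (Fin.castAdd 4 i)) +
    ∑ i : Fin 4, X (Fin.natAdd 4 i) (Fin.natAdd 4 i) := by
  have h := Fin.sum_univ_add (f := fun i : Fin (4 + 4) => X i i)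
  exact h

end Stmt16
namespace Stmt16

abbrev sl4 : Submodule ℂ (Matrix (Fin 4) (Fin 4) ℂ) :=
  LinearMap.ker (Matrix.traceLinearMap (Fin 4) ℂ ℂ)

abbrev Ksub : Submodule ℂ gl8 := trKer ⊓ LinearMap.ker (actL p1four)

lemma mem_K_iff (X : gl8) : X ∈ Ksub ↔
    ((∀ i j : Fin 8, (((i:ℕ) < 4 ∧ 4 ≤ (j:ℕ)) ∨ ((j:ℕ) < 4 ∧ 4 ≤ (i:ℕ))) → X i j = 0) ∧
      (∑ i : Fin 4, X (Fin.castAdd 4 i) (Fin.castAdd 4 i)) = 0 ∧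
      (∑ i : Fin 4, X (Fin.natAdd 4 i) (Fin.natAdd 4 i)) = 0) := by
  rw [Submodule.mem_inf]
  constructor
  · rintro ⟨-, hbr⟩
    exact (key_iff X).mp hbr
  · intro h
    refine ⟨?_, (key_iff X).mpr h⟩
    show Matrix.trace X = 0
    rw [trace_split, h.2.1, h.2.2, add_zero]

def embBlocks (A D : Matrix (Fin 4) (Fin 4) ℂ) : gl8 :=
  Matrix.of fun i j =>
    if hi : (i:ℕ) < 4 then
      (if hj : (j:ℕ) < 4 then A ⟨(i:ℕ), hi⟩ ⟨(j:ℕ), hj⟩ else 0)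
    else
      (if (j:ℕ) < 4 then 0
       else D ⟨(i:ℕ) - 4, by have := i.isLt; omega⟩ ⟨(j:ℕ) - 4, by have := j.isLt; omega⟩)

lemma embBlocks_LL (A D : Matrix (Fin 4) (Fin 4) ℂ) (i j : Fin 4) :
    embBlocks A D (wL i) (wL j) = A i j := by
  simp only [embBlocks, Matrix.of_apply, wL, Fin.coe_castAdd]
  rw [dif_pos i.isLt, dif_pos j.isLt]

lemma embBlocks_UU (A D : Matrix (Fin 4) (Fin 4) ℂ) (i j : Fin 4) :
    embBlocks A D (wU i) (wU j) = D i j := by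
  simp only [embBlocks, Matrix.of_apply, wU, Fin.coe_natAdd]
  rw [dif_neg (by omega), if_neg (by omega)]
  congr 1 <;> exact Fin.ext (by simp)

lemma embBlocks_mixed (A D : Matrix (Fin 4) (Fin 4) ℂ) (i j : Fin 8)
    (h : ((i:ℕ) < 4 ∧ 4 ≤ (j:ℕ)) ∨ ((j:ℕ) < 4 ∧ 4 ≤ (i:ℕ))) :
    embBlocks A D i j = 0 := by
  simp only [embBlocks, Matrix.of_apply]
  rcases h with ⟨hi, hj⟩ | ⟨hj, hi⟩
  · rw [dif_pos hi, dif_neg (by omega)]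
  · rw [dif_neg (by omega), if_pos hj]

lemma wL_mk (i : Fin 8) (hi : (i:ℕ) < 4) : wL ⟨(i:ℕ), hi⟩ = i := Fin.ext rfl

lemma wU_mk (i : Fin 8) (hi : ¬ (i:ℕ) < 4) :
    wU ⟨(i:ℕ) - 4, by have := i.isLt; omega⟩ = i := Fin.ext (by simp [wU]; omega)

def blockA (X : gl8) : Matrix (Fin 4) (Fin 4) ℂ := Matrix.of fun i j => X (wL i) (wL j)
def blockD (X : gl8) : Matrix (Fin 4) (Fin 4) ℂ := Matrix.of fun i j => X (wU i) (wU j)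

def fmap : Ksub →ₗ[ℂ] ↥sl4 × ↥sl4 where
  toFun X := (⟨blockA X.1, by
      show Matrix.trace (blockA X.1) = 0
      exact ((mem_K_iff X.1).mp X.2).2.1⟩,
    ⟨blockD X.1, by
      show Matrix.trace (blockD X.1) = 0
      exact ((mem_K_iff X.1).mp X.2).2.2⟩)
  map_add' x y := by
    refine Prod.ext (Subtype.ext ?_) (Subtype.ext ?_) <;> rfl
  map_smul' c x := by
    refine Prod.ext (Subtype.ext ?_) (Subtype.ext ?_) <;> rfl

def gmap : ↥sl4 × ↥sl4 →ₗ[ℂ] Ksub where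
  toFun p := ⟨embBlocks p.1.1 p.2.1, by
    rw [mem_K_iff]
    refine ⟨fun i j h => embBlocks_mixed _ _ i j h, ?_, ?_⟩
    · have : ∀ i : Fin 4, embBlocks p.1.1 p.2.1 (Fin.castAdd 4 i) (Fin.castAdd 4 i)
          = p.1.1 i i := fun i => embBlocks_LL _ _ i i
      rw [Finset.sum_congr rfl (fun i _ => this i)]
      exact p.1.2
    · have : ∀ i : Fin 4, embBlocks p.1.1 p.2.1 (Fin.natAdd 4 i) (Fin.natAdd 4 i)
          = p.2.1 i i := fun i => embBlocks_UU _ _ i i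
      rw [Finset.sum_congr rfl (fun i _ => this i)]
      exact p.2.2⟩
  map_add' x y := by
    refine Subtype.ext ?_
    show embBlocks _ _ = embBlocks _ _ + embBlocks _ _
    ext i j
    simp only [embBlocks, Matrix.of_apply, Matrix.add_apply]
    split_ifs <;> simp [Matrix.add_apply]
  map_smul' c x := by
    refine Subtype.ext ?_
    show embBlocks _ _ = c • embBlocks _ _
    ext i j
    simp only [embBlocks, Matrix.of_apply, Matrix.smul_apply, smul_eq_mul]
    split_ifs <;> simp [Matrix.smul_apply]

lemma fg_id (p : ↥sl4 × ↥sl4) : fmap (gmap p) = p := by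
  refine Prod.ext (Subtype.ext ?_) (Subtype.ext ?_)
  · show blockA (embBlocks p.1.1 p.2.1) = p.1.1
    ext i j
    exact embBlocks_LL _ _ i j
  · show blockD (embBlocks p.1.1 p.2.1) = p.2.1
    ext i j
    exact embBlocks_UU _ _ i j

lemma gf_id (X : Ksub) : gmap (fmap X) = X := by
  refine Subtype.ext ?_
  show embBlocks (blockA X.1) (blockD X.1) = X.1
  have hmem := (mem_K_iff X.1).mp X.2
  ext i j
  by_cases hi : (i:ℕ) < 4
  · by_cases hj : (j:ℕ) < 4
    · have h1 : embBlocks (blockA X.1) (blockD X.1) (wL ⟨(i:ℕ), hi⟩) (wL ⟨(j:ℕ), hj⟩)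
          = blockA X.1 ⟨(i:ℕ), hi⟩ ⟨(j:ℕ), hj⟩ := embBlocks_LL _ _ _ _
      rw [wL_mk i hi, wL_mk j hj] at h1
      rw [h1]
      show X.1 (wL ⟨(i:ℕ), hi⟩) (wL ⟨(j:ℕ), hj⟩) = X.1 i j
      rw [wL_mk i hi, wL_mk j hj]
    · rw [embBlocks_mixed _ _ i j (Or.inl ⟨hi, by omega⟩),
        hmem.1 i j (Or.inl ⟨hi, by omega⟩)]
  · by_cases hj : (j:ℕ) < 4
    · rw [embBlocks_mixed _ _ i j (Or.inr ⟨hj, by omega⟩),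
        hmem.1 i j (Or.inr ⟨hj, by omega⟩)]
    · have h1 : embBlocks (blockA X.1) (blockD X.1)
          (wU ⟨(i:ℕ) - 4, by have := i.isLt; omega⟩)
          (wU ⟨(j:ℕ) - 4, by have := j.isLt; omega⟩)
          = blockD X.1 ⟨(i:ℕ) - 4, by have := i.isLt; omega⟩
            ⟨(j:ℕ) - 4, by have := j.isLt; omega⟩ := embBlocks_UU _ _ _ _
      rw [wU_mk i hi, wU_mk j hj] at h1
      rw [h1]
      show X.1 (wU _) (wU _) = X.1 i j
      rw [wU_mk i hi, wU_mk j hj]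

noncomputable def KEquiv : Ksub ≃ₗ[ℂ] ↥sl4 × ↥sl4 :=
  LinearEquiv.ofLinear fmap gmap (LinearMap.ext fg_id) (LinearMap.ext gf_id)

lemma finrank_sl4 : Module.finrank ℂ ↥sl4 = 15 := by
  have hsurj : Function.Surjective (Matrix.traceLinearMap (Fin 4) ℂ ℂ) := by
    intro c
    refine ⟨(c / 4) • 1, ?_⟩
    show Matrix.trace ((c / 4) • (1 : Matrix (Fin 4) (Fin 4) ℂ)) = c
    rw [Matrix.trace_smul, Matrix.trace_one]
    simp only [smul_eq_mul, Fintype.card_fin]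
    norm_num
  have h1 : LinearMap.range (Matrix.traceLinearMap (Fin 4) ℂ ℂ) = ⊤ :=
    LinearMap.range_eq_top.mpr hsurj
  have h2 := LinearMap.finrank_range_add_finrank_ker (Matrix.traceLinearMap (Fin 4) ℂ ℂ)
  rw [h1, finrank_top, Module.finrank_self] at h2
  have h3 : Module.finrank ℂ (Matrix (Fin 4) (Fin 4) ℂ) = 16 := by
    rw [Module.finrank_matrix]
    simp
  rw [h3] at h2
  show Module.finrank ℂ ↥(LinearMap.ker (Matrix.traceLinearMap (Fin 4) ℂ ℂ)) = 15
  omega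

lemma finrank_K : Module.finrank ℂ ↥(trKer ⊓ LinearMap.ker (actL p1four)) = 30 := by
  rw [KEquiv.finrank_eq, Module.finrank_prod, finrank_sl4]

end Stmt16
open Stmt16 in
/-- The stabilizer in `𝔰𝔩₈(ℂ)` of
`p₁ = e₁∧e₂∧e₃∧e₄ + e₅∧e₆∧e₇∧e₈` under the derivation action on `Λ⁴ℂ⁸` is
exactly the set of block-diagonal matrices `diag(A, D)` with `tr A = 0` and
`tr D = 0` (blocks for `ℂ⁸ = ⟨e₁,…,e₄⟩ ⊕ ⟨e₅,…,e₈⟩`); in particular it has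
dimension 30. -/
theorem statement16 :
    {X : gl8 | Matrix.trace X = 0 ∧ br01 X p1four = 0} =
      {X : gl8 |
        (∀ i j : Fin 8, (((i : ℕ) < 4 ∧ 4 ≤ (j : ℕ)) ∨ ((j : ℕ) < 4 ∧ 4 ≤ (i : ℕ))) →
          X i j = 0) ∧
        (∑ i : Fin 4, X (Fin.castAdd 4 i) (Fin.castAdd 4 i)) = 0 ∧
        (∑ i : Fin 4, X (Fin.natAdd 4 i) (Fin.natAdd 4 i)) = 0} ∧
    Module.finrank ℂ ↥(trKer ⊓ LinearMap.ker (actL p1four)) = 30 := by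
  constructor
  · ext X
    simp only [Set.mem_setOf_eq]
    constructor
    · rintro ⟨-, hbr⟩
      exact (key_iff X).mp hbr
    · rintro ⟨h0, h1, h2⟩
      exact ⟨by rw [trace_split, h1, h2, add_zero], (key_iff X).mpr ⟨h0, h1, h2⟩⟩
  · exact finrank_K

end
end

section
/- The normal form e of nilpotent orbit №93 can be moved by a general linear transformation onto the lowering element f̃ of orbit №94: there exists g ∈ GL₈(ℂ) such that (Λ⁴g)(e) = f̃, where e = e₂∧e₃∧e₄∧e₅ + e₁∧e₃∧e₅∧e₆ + e₁∧e₄∧e₅∧e₇ + e₁∧e₂∧e₆∧e₇ + e₁∧e₃∧e₄∧e₈ + e₁∧e₂∧e₅∧e₈ and f̃ = 3·e₄∧e₅∧e₆∧e₇ − e₂∧e₄∧e₅∧e₈ − e₃∧e₄∧e₆∧e₈ + 3·e₁∧e₅∧e₆∧e₈ + 4·e₂∧e₃∧e₇∧e₈ + e₁∧e₄∧e₇∧e₈. -/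
/-!
Common setup: the ℤ/2-graded Lie algebra 𝔤 = 𝔰𝔩(V) ⊕ Λ⁴V for V = ℂ⁸,
following Antonyan.  Four-vectors are modeled as alternating 4-tensors in
⊗⁴V, i.e. functions `(Fin 4 → Fin 8) → ℂ`, via the embedding
`v₁∧v₂∧v₃∧v₄ = Σ_σ sgn σ · v_{σ(1)}⊗v_{σ(2)}⊗v_{σ(3)}⊗v_{σ(4)}`.
(All indices are shifted from `1,…,8` to `0,…,7`.)
-/

noncomputable section

open scoped BigOperators

/-- The normal form `e` of nilpotent orbit №93 (indices shifted to `0,…,7`). -/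
def e93 : T4 :=
  wedge4 ![1, 2, 3, 4] + wedge4 ![0, 2, 4, 5] + wedge4 ![0, 3, 4, 6] +
    wedge4 ![0, 1, 5, 6] + wedge4 ![0, 2, 3, 7] + wedge4 ![0, 1, 4, 7]

/-- The lowering element `f̃` of orbit №94 (indices shifted to `0,…,7`). -/
def f94 : T4 :=
  (3 : ℂ) • wedge4 ![3, 4, 5, 6] - wedge4 ![1, 3, 4, 7] - wedge4 ![2, 3, 5, 7] +
    (3 : ℂ) • wedge4 ![0, 4, 5, 7] + (4 : ℂ) • wedge4 ![1, 2, 6, 7] +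
    wedge4 ![0, 3, 6, 7]

/-!
Take `g = diag(12, -4, -12, 1, 3, 1, 1, 1/12) · P`, where `P` is the permutation matrix of
`i ↦ 7 - i`. A monomial matrix sends each `e_w` to a multiple of another basis four-vector;
here the reversal carries the six index sets of `e` onto those of `f̃` (reversing four factors
is an even permutation, so no signs appear), and the diagonal entries are a solution of the six
multiplicative equations making the products over these index sets equal to the coefficients
`3, -1, -1, 4, 3, 1` of `f̃`.
-/

open Matrix

lemma gact_add (g : gl8) (S T : T4) : gact g (S + T) = gact g S + gact g T := by
  funext v
  simp only [gact, Pi.add_apply, mul_add, Finset.sum_add_distrib]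

lemma diagonal_mul_permMatrix_apply (d : Fin 8 → ℂ) (σ : Equiv.Perm (Fin 8)) (i j : Fin 8) :
    (diagonal d * σ.permMatrix ℂ) i j = if j = σ i then d i else 0 := by
  simp [diagonal_mul, Equiv.toPEquiv_apply, eq_comm]

lemma gact_diagonal_mul_permMatrix (d : Fin 8 → ℂ) (σ : Equiv.Perm (Fin 8)) (T : T4) :
    gact (diagonal d * σ.permMatrix ℂ) T = fun v => (∏ a, d (v a)) * T (σ ∘ v) := by
  funext v
  rw [gact, Finset.sum_eq_single (σ ∘ v)]
  · simp
  · intro w _ hw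
    obtain ⟨a, ha⟩ := Function.ne_iff.mp hw
    have hzero : (diagonal d * σ.permMatrix ℂ) (v a) (w a) = 0 := by
      rw [diagonal_mul_permMatrix_apply]
      exact if_neg ha
    rw [Finset.prod_eq_zero (Finset.mem_univ a) hzero, zero_mul]
  · simp

lemma wedge4_perm_comp_apply (σ : Equiv.Perm (Fin 8)) (w v : Fin 4 → Fin 8) :
    wedge4 w (σ ∘ v) = wedge4 (σ.symm ∘ w) v := by
  simp only [wedge4, Function.comp_apply, Equiv.symm_apply_eq]

lemma wedge4_comp_perm (w : Fin 4 → Fin 8) (τ : Equiv.Perm (Fin 4)) :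
    wedge4 (w ∘ τ) = sgn τ • wedge4 w := by
  funext v
  exact det_permute τ (of fun a b => if w a = v b then (1 : ℂ) else 0)

lemma prod_mul_wedge4 (d : Fin 8 → ℂ) (u v : Fin 4 → Fin 8) :
    (∏ b, d (v b)) * wedge4 u v = (∏ a, d (u a)) * wedge4 u v := by
  rw [wedge4, ← det_mul_row, ← det_mul_column]
  congr 1
  ext a b
  by_cases h : u a = v b <;> simp [h]

lemma gact_diagonal_mul_permMatrix_wedge4 (d : Fin 8 → ℂ) (σ : Equiv.Perm (Fin 8))
    (w : Fin 4 → Fin 8) :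
    gact (diagonal d * σ.permMatrix ℂ) (wedge4 w) =
      (∏ a, d (σ.symm (w a))) • wedge4 (σ.symm ∘ w) := by
  funext v
  simp only [gact_diagonal_mul_permMatrix, Pi.smul_apply, smul_eq_mul]
  rw [wedge4_perm_comp_apply, prod_mul_wedge4]
  rfl

def scale93 : Fin 8 → ℂ := ![12, -4, -12, 1, 3, 1, 1, 12⁻¹]

def g93 : gl8 := diagonal scale93 * (Fin.revPerm : Equiv.Perm (Fin 8)).permMatrix ℂ

lemma det_g93_ne_zero : g93.det ≠ 0 := by
  rw [g93, det_mul, det_diagonal, det_permutation]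
  refine mul_ne_zero (Finset.prod_ne_zero_iff.mpr fun i _ => ?_) (by simp)
  fin_cases i <;> norm_num [scale93]

lemma gact_g93_wedge4 (w u : Fin 4 → Fin 8) (h : Fin.rev ∘ w = u ∘ Fin.rev) :
    gact g93 (wedge4 w) = (∏ a, scale93 (u a)) • wedge4 u := by
  have hsign : sgn (Fin.revPerm : Equiv.Perm (Fin 4)) = 1 := by
    simp [sgn, show Equiv.Perm.sign (Fin.revPerm : Equiv.Perm (Fin 4)) = 1 by decide]
  have hrev : (Fin.revPerm : Equiv.Perm (Fin 8)).symm ∘ w = u ∘ Fin.revPerm := h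
  have hprod : ∏ a, scale93 ((Fin.revPerm : Equiv.Perm (Fin 8)).symm (w a)) =
      ∏ a, scale93 (u a) := by
    rw [← Equiv.prod_comp Fin.revPerm (fun a => scale93 (u a))]
    exact Finset.prod_congr rfl fun a _ => congrArg scale93 (congrFun hrev a)
  rw [g93, gact_diagonal_mul_permMatrix_wedge4, hprod, hrev, wedge4_comp_perm, hsign, one_smul]

/-- There is `g ∈ GL₈(ℂ)` with `(Λ⁴g)(e) = f̃`. -/
theorem statement19 :
    ∃ g : Matrix.GeneralLinearGroup (Fin 8) ℂ, gact (g : gl8) e93 = f94 := by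
  refine ⟨GeneralLinearGroup.mkOfDetNeZero g93 det_g93_ne_zero, ?_⟩
  simp only [GeneralLinearGroup.val_mkOfDetNeZero, e93, gact_add]
  rw [gact_g93_wedge4 ![1, 2, 3, 4] ![3, 4, 5, 6] (by decide),
    gact_g93_wedge4 ![0, 2, 4, 5] ![2, 3, 5, 7] (by decide),
    gact_g93_wedge4 ![0, 3, 4, 6] ![1, 3, 4, 7] (by decide),
    gact_g93_wedge4 ![0, 1, 5, 6] ![1, 2, 6, 7] (by decide),
    gact_g93_wedge4 ![0, 2, 3, 7] ![0, 4, 5, 7] (by decide),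
    gact_g93_wedge4 ![0, 1, 4, 7] ![0, 3, 6, 7] (by decide)]
  simp only [f94, Fin.prod_univ_four, scale93, cons_val]
  module

end
end
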